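/- arXiv:2212.00708 — 9 statements merged into one kernel-verified Lean document; each statement's English description precedes it below -/
import Mathlib

section
/- Let A be maximally dissipative on H with Lagrange identity ⟨Au,v⟩ − ⟨u,Av⟩ = i⟨Γu,Γv⟩_E for u,v ∈ D(A), where Γ : D(A) → E is bounded in the graph norm with dense range. Then for λ ∈ ℂ₊ and μ ∈ ℂ₋ the following Green identity holds as an operator identity on H: (A+λ)^{-1} − (A*+μ)^{-1} + (λ−μ)(A*+μ)^{-1}(A+λ)^{-1} = −i (Γ(A+μ̄)^{-1})* (Γ(A+λ)^{-1}). -/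
/-!
Since `(A* + μ)⁻¹` is the Hilbert adjoint of `(A + μ̄)⁻¹`, it suffices to test the identity against
`g = (A + μ̄) v` and `h = (A + λ) u` with `u, v ∈ D(A)`. Every term then becomes an inner product
of `u, v, Au, Av`; the `λ`- and `μ`-terms cancel and what remains is the Lagrange identity.
-/

open Complex MeasureTheory

noncomputable section

variable {H : Type*} [NormedAddCommGroup H] [InnerProductSpace ℂ H] [CompleteSpace H]

local notation "⟪" x ", " y "⟫" => @inner ℂ _ _ x y

/-- `A` is dissipative: densely defined with `Im ⟨Au,u⟩ ≥ 0`
(the paper's inner product is linear in the first slot, so `⟨Au,u⟩ = ⟪u, Au⟫` in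
Mathlib's convention). -/
def IsDissipative (A : H →ₗ.[ℂ] H) : Prop :=
  Dense (A.domain : Set H) ∧ ∀ u : A.domain, 0 ≤ (⟪(u : H), A u⟫).im

def IsMaxDissipative (A : H →ₗ.[ℂ] H) : Prop :=
  IsDissipative A ∧ ∀ B : H →ₗ.[ℂ] H, IsDissipative B → A ≤ B → B = A

/-- `R` is the everywhere-defined bounded resolvent `(A - z)⁻¹` of `A`. -/
def IsResolventAt (A : H →ₗ.[ℂ] H) (z : ℂ) (R : H →L[ℂ] H) : Prop :=
  (∀ u : A.domain, R (A u - z • (u : H)) = (u : H)) ∧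
  ∀ h : H, ∃ u : A.domain, (u : H) = R h ∧ A u - z • (u : H) = h

namespace IsResolventAt

theorem exists_eq_add_smul {H : Type*} [NormedAddCommGroup H] [InnerProductSpace ℂ H]
    {A : H →ₗ.[ℂ] H} {z : ℂ} {R : H →L[ℂ] H} (hR : IsResolventAt A (-z) R) (h : H) :
    ∃ u : A.domain, h = A u + z • (u : H) ∧ R h = u := by
  obtain ⟨u, hRu, hu⟩ := hR.2 h
  exact ⟨u, by simpa using hu.symm, hRu.symm⟩

theorem adjoint_eq {A : H →ₗ.[ℂ] H} {z : ℂ} {R : H →L[ℂ] H} (hA : Dense (A.domain : Set H))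
    (hR : IsResolventAt A z R) {S : H →L[ℂ] H} (hS : IsResolventAt A.adjoint (starRingEnd ℂ z) S) :
    ContinuousLinearMap.adjoint R = S := by
  ext y
  refine ext_inner_left ℂ fun x => ?_
  obtain ⟨v, hRv, rfl⟩ := hR.2 x
  obtain ⟨w, hSw, rfl⟩ := hS.2 y
  rw [ContinuousLinearMap.adjoint_inner_right, ← hRv, ← hSw, inner_sub_left, inner_sub_right,
    (LinearPMap.adjoint_isFormalAdjoint hA).symm v w, inner_smul_left, inner_smul_right]

end IsResolventAt

theorem abstract_green_identity_general
    {E : Type*} [NormedAddCommGroup E] [InnerProductSpace ℂ E] [CompleteSpace E]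
    (A : H →ₗ.[ℂ] H) (hA : IsMaxDissipative A)
    (Γ : A.domain →ₗ[ℂ] E)
    (hLag : ∀ u v : A.domain, ⟪(v : H), A u⟫ - ⟪A v, (u : H)⟫ = Complex.I * ⟪Γ v, Γ u⟫)
    (lam mu : ℂ)
    (Rlam RSmu : H →L[ℂ] H)
    (hRlam : IsResolventAt A (-lam) Rlam)
    (hRSmu : IsResolventAt A.adjoint (-mu) RSmu)
    (Glam Gmuc : H →L[ℂ] E)
    -- `Glam = Γ (A+λ)⁻¹`, `Gmuc = Γ (A+μ̄)⁻¹`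
    (hGlam : ∀ u : A.domain, Glam (A u + lam • (u : H)) = Γ u)
    (hGmuc : ∀ u : A.domain, Gmuc (A u + (starRingEnd ℂ mu) • (u : H)) = Γ u)
    (Rmuc : H →L[ℂ] H) (hRmuc : IsResolventAt A (-(starRingEnd ℂ mu)) Rmuc) :
    Rlam - RSmu + (lam - mu) • (RSmu.comp Rlam)
      = (-Complex.I) • ((ContinuousLinearMap.adjoint Gmuc).comp Glam) := by
  have hRSmu_adj : ContinuousLinearMap.adjoint Rmuc = RSmu :=
    hRmuc.adjoint_eq hA.1.1 (by rwa [map_neg, Complex.conj_conj])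
  ext h
  refine ext_inner_left ℂ fun g => ?_
  obtain ⟨u, rfl, hRu⟩ := hRlam.exists_eq_add_smul h
  obtain ⟨v, rfl, hRv⟩ := hRmuc.exists_eq_add_smul g
  rw [← hRSmu_adj]
  simp only [add_apply, sub_apply, smul_apply, ContinuousLinearMap.comp_apply, inner_add_right,
    inner_sub_right, inner_smul_right, ContinuousLinearMap.adjoint_inner_right, hRu, hRv,
    hGlam, hGmuc, inner_add_left, inner_smul_left, Complex.conj_conj]
  linear_combination -(hLag u v)

/-- First abstract Green identity:
`(A+λ)⁻¹ - (A*+μ)⁻¹ + (λ-μ)(A*+μ)⁻¹(A+λ)⁻¹ = -i (Γ(A+μ̄)⁻¹)* (Γ(A+λ)⁻¹)`. -/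
theorem abstract_green_identity
    {E : Type*} [NormedAddCommGroup E] [InnerProductSpace ℂ E] [CompleteSpace E]
    (A : H →ₗ.[ℂ] H) (hA : IsMaxDissipative A)
    (Γ : A.domain →ₗ[ℂ] E)
    (hΓb : ∃ C : ℝ, ∀ u : A.domain, ‖Γ u‖ ≤ C * (‖(u : H)‖ + ‖A u‖))
    (hΓd : DenseRange Γ)
    (hLag : ∀ u v : A.domain, ⟪(v : H), A u⟫ - ⟪A v, (u : H)⟫ = Complex.I * ⟪Γ v, Γ u⟫)
    (lam mu : ℂ) (hlam : 0 < lam.im) (hmu : mu.im < 0)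
    (Rlam RSmu : H →L[ℂ] H)
    (hRlam : IsResolventAt A (-lam) Rlam)
    (hRSmu : IsResolventAt A.adjoint (-mu) RSmu)
    (Glam Gmuc : H →L[ℂ] E)
    -- `Glam = Γ (A+λ)⁻¹`, `Gmuc = Γ (A+μ̄)⁻¹`
    (hGlam : ∀ u : A.domain, Glam (A u + lam • (u : H)) = Γ u)
    (hGmuc : ∀ u : A.domain, Gmuc (A u + (starRingEnd ℂ mu) • (u : H)) = Γ u)
    (Rmuc : H →L[ℂ] H) (hRmuc : IsResolventAt A (-(starRingEnd ℂ mu)) Rmuc) :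
    Rlam - RSmu + (lam - mu) • (RSmu.comp Rlam)
      = (-Complex.I) • ((ContinuousLinearMap.adjoint Gmuc).comp Glam) :=
  abstract_green_identity_general A hA Γ hLag lam mu Rlam RSmu hRlam hRSmu Glam Gmuc hGlam hGmuc
    Rmuc hRmuc
end
end

section
/- Let A be maximally dissipative with Lagrange identities ⟨Au,v⟩−⟨u,Av⟩ = i⟨Γu,Γv⟩_E on D(A) and ⟨A*u,v⟩−⟨u,A*v⟩ = −i⟨Γ_*u,Γ_*v⟩_{E_*} on D(A*). Then for each z ∈ ℂ₊ there exists a unique contraction S(z) : E → E_* such that S(z)Γu = Γ_*(A*−z)^{-1}(A−z)u for all u ∈ D(A), and z ↦ S(z) is analytic on ℂ₊. -/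
open Complex MeasureTheory

noncomputable section

variable {H : Type*} [NormedAddCommGroup H] [InnerProductSpace ℂ H] [CompleteSpace H]

local notation "⟪" x ", " y "⟫" => @inner ℂ _ _ x y

/-!
If `(A* - z) v = (A - z) u`, the two Lagrange identities and the formal adjointness of `A*` give
`‖Γ u‖² = ‖Γ_* v‖² + 2 Im z ‖u - v‖²`. So `Γ u ↦ Γ_* v = G z ((A - z) u)` is a contraction on the
dense range of `Γ`, and `S z` is its unique continuous extension. For analyticity, put
`v = (A* - w)⁻¹ (A - w) u` and `p = (A* - z)⁻¹ (v - u)`: then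
`(A* - z) (v + (z - w) p) = (A - z) u`, which makes `S z - S w - (z - w) S' w` equal to
`(z - w)²` times an operator of norm at most `1 / (2 Im w Im z)`.
-/

open Topology Asymptotics

theorem ContinuousLinearMap.opNorm_le_of_denseRange {𝕜 ι V W : Type*} [NontriviallyNormedField 𝕜]
    [NormedAddCommGroup V] [NormedSpace 𝕜 V] [NormedAddCommGroup W] [NormedSpace 𝕜 W]
    (T : V →L[𝕜] W) {e : ι → V} (he : DenseRange e) {c : ℝ} (hc : 0 ≤ c)
    (h : ∀ i, ‖T (e i)‖ ≤ c * ‖e i‖) : ‖T‖ ≤ c :=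
  T.opNorm_le_bound hc fun x => he.induction_on x (isClosed_le (by fun_prop) (by fun_prop)) h

theorem hasDerivAt_of_norm_sub_sub_smul_le_sq {𝕜 W : Type*} [NontriviallyNormedField 𝕜]
    [NormedAddCommGroup W] [NormedSpace 𝕜 W] {f : 𝕜 → W} {f' : W} {x : 𝕜} {C : ℝ}
    (h : ∀ᶠ y in 𝓝 x, ‖f y - f x - (y - x) • f'‖ ≤ C * ‖y - x‖ ^ 2) : HasDerivAt f f' x :=
  hasDerivAt_iff_isLittleO.2 <|
    (IsBigO.of_bound C (h.mono fun y hy => by simpa using hy)).trans_isLittleO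
      (isLittleO_pow_sub_sub x one_lt_two)

section InnerProduct

variable {X E : Type*} [NormedAddCommGroup X] [InnerProductSpace ℂ X]
  [NormedAddCommGroup E] [InnerProductSpace ℂ E]

theorem norm_sq_eq_two_mul_im_inner_of_inner_sub_inner {x y : X} {g : E}
    (h : ⟪x, y⟫ - ⟪y, x⟫ = I * ⟪g, g⟫) : ‖g‖ ^ 2 = 2 * (⟪x, y⟫).im := by
  have h' := congrArg Complex.im h
  rw [← inner_conj_symm y x, inner_self_eq_norm_sq_to_K, ← RCLike.ofReal_pow,
    RCLike.ofReal_eq_complex_ofReal] at h'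
  simp only [sub_im, conj_im, mul_im, I_re, I_im, ofReal_re, ofReal_im] at h'
  linarith

theorem im_inner_eq_im_inner_sub_smul_add (x y : X) (z : ℂ) :
    (⟪x, y⟫).im = (⟪x, y - z • x⟫).im + z.im * ‖x‖ ^ 2 := by
  rw [inner_sub_right, inner_smul_right, inner_self_eq_norm_sq_to_K, ← RCLike.ofReal_pow,
    RCLike.ofReal_eq_complex_ofReal]
  simp only [sub_im, mul_im, ofReal_re, ofReal_im]
  ring

end InnerProduct

section Straus

variable {X E F : Type*} [NormedAddCommGroup X] [InnerProductSpace ℂ X] [CompleteSpace X]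
  [NormedAddCommGroup E] [InnerProductSpace ℂ E] [NormedAddCommGroup F] [InnerProductSpace ℂ F]
  {A : X →ₗ.[ℂ] X} {Γ : A.domain →ₗ[ℂ] E} {Γs : A.adjoint.domain →ₗ[ℂ] F}

theorem norm_sq_add_two_mul_im_mul_norm_sq_le
    (hΓs : ∀ v : A.adjoint.domain, ‖Γs v‖ ^ 2 = -(2 * (⟪(v : X), A.adjoint v⟫).im))
    (z : ℂ) (v : A.adjoint.domain) :
    ‖Γs v‖ ^ 2 + 2 * z.im * ‖(v : X)‖ ^ 2 ≤ 2 * (‖(v : X)‖ * ‖A.adjoint v - z • (v : X)‖) := by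
  have hsplit := im_inner_eq_im_inner_sub_smul_add (v : X) (A.adjoint v) z
  have hcs : -(⟪(v : X), A.adjoint v - z • (v : X)⟫).im ≤ ‖(v : X)‖ * ‖A.adjoint v - z • (v : X)‖ :=
    (neg_le_abs _).trans ((abs_im_le_norm _).trans (norm_inner_le_norm _ _))
  rw [hΓs v]
  linarith

theorem im_mul_norm_le_norm_adjoint_sub_smul
    (hΓs : ∀ v : A.adjoint.domain, ‖Γs v‖ ^ 2 = -(2 * (⟪(v : X), A.adjoint v⟫).im))
    (z : ℂ) (v : A.adjoint.domain) :
    z.im * ‖(v : X)‖ ≤ ‖A.adjoint v - z • (v : X)‖ := by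
  have h := norm_sq_add_two_mul_im_mul_norm_sq_le hΓs z v
  rcases (norm_nonneg (v : X)).eq_or_lt with hv | hv
  · rw [← hv, mul_zero]
    exact norm_nonneg _
  · nlinarith [sq_nonneg ‖Γs v‖]

theorem sqrt_mul_norm_le_norm_adjoint_sub_smul
    (hΓs : ∀ v : A.adjoint.domain, ‖Γs v‖ ^ 2 = -(2 * (⟪(v : X), A.adjoint v⟫).im))
    {z : ℂ} (hz : 0 ≤ z.im) (v : A.adjoint.domain) :
    √(2 * z.im) * ‖Γs v‖ ≤ ‖A.adjoint v - z • (v : X)‖ := by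
  have h := norm_sq_add_two_mul_im_mul_norm_sq_le hΓs z v
  refine (sq_le_sq₀ (by positivity) (norm_nonneg _)).1 ?_
  rw [mul_pow, Real.sq_sqrt (by positivity)]
  nlinarith [sq_nonneg (‖A.adjoint v - z • (v : X)‖ - 2 * z.im * ‖(v : X)‖)]

theorem norm_sq_eq_norm_sq_add_two_mul_im_mul_norm_sub_sq (hdense : Dense (A.domain : Set X))
    (hΓ : ∀ u : A.domain, ‖Γ u‖ ^ 2 = 2 * (⟪(u : X), A u⟫).im)
    (hΓs : ∀ v : A.adjoint.domain, ‖Γs v‖ ^ 2 = -(2 * (⟪(v : X), A.adjoint v⟫).im))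
    {z : ℂ} {u : A.domain} {v : A.adjoint.domain}
    (huv : A.adjoint v - z • (v : X) = A u - z • (u : X)) :
    ‖Γ u‖ ^ 2 = ‖Γs v‖ ^ 2 + 2 * z.im * ‖(u : X) - v‖ ^ 2 := by
  have hu := im_inner_eq_im_inner_sub_smul_add (u : X) (A u) z
  have hv := im_inner_eq_im_inner_sub_smul_add (v : X) (A.adjoint v) z
  have hcross : (⟪(u : X), A u - z • (u : X)⟫).im + (⟪(v : X), A u - z • (u : X)⟫).im
      = -(2 * z.im * (⟪(u : X), (v : X)⟫).re) := by
    nth_rewrite 1 [← huv]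
    rw [inner_sub_right, inner_sub_right, inner_smul_right, inner_smul_right,
      ← inner_conj_symm (u : X) (A.adjoint v), LinearPMap.adjoint_isFormalAdjoint hdense v u,
      ← inner_conj_symm (v : X) (u : X)]
    simp only [sub_im, mul_im, conj_im, conj_re]
    ring
  have hnorm : ‖(u : X) - v‖ ^ 2 = ‖(u : X)‖ ^ 2 - 2 * (⟪(u : X), (v : X)⟫).re + ‖(v : X)‖ ^ 2 :=
    norm_sub_sq (𝕜 := ℂ) _ _
  rw [hΓ, hΓs, hu, hv, huv, hnorm]
  linarith

theorem norm_le_norm_of_adjoint_sub_smul_eq (hdense : Dense (A.domain : Set X))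
    (hΓ : ∀ u : A.domain, ‖Γ u‖ ^ 2 = 2 * (⟪(u : X), A u⟫).im)
    (hΓs : ∀ v : A.adjoint.domain, ‖Γs v‖ ^ 2 = -(2 * (⟪(v : X), A.adjoint v⟫).im))
    {z : ℂ} (hz : 0 ≤ z.im) {u : A.domain} {v : A.adjoint.domain}
    (huv : A.adjoint v - z • (v : X) = A u - z • (u : X)) :
    ‖Γs v‖ ≤ ‖Γ u‖ := by
  have h := norm_sq_eq_norm_sq_add_two_mul_im_mul_norm_sub_sq hdense hΓ hΓs huv
  refine (sq_le_sq₀ (norm_nonneg _) (norm_nonneg _)).1 ?_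
  nlinarith [sq_nonneg ‖(u : X) - v‖]

theorem sqrt_mul_norm_sub_le_norm_of_adjoint_sub_smul_eq (hdense : Dense (A.domain : Set X))
    (hΓ : ∀ u : A.domain, ‖Γ u‖ ^ 2 = 2 * (⟪(u : X), A u⟫).im)
    (hΓs : ∀ v : A.adjoint.domain, ‖Γs v‖ ^ 2 = -(2 * (⟪(v : X), A.adjoint v⟫).im))
    {z : ℂ} (hz : 0 ≤ z.im) {u : A.domain} {v : A.adjoint.domain}
    (huv : A.adjoint v - z • (v : X) = A u - z • (u : X)) :
    √(2 * z.im) * ‖(u : X) - v‖ ≤ ‖Γ u‖ := by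
  have h := norm_sq_eq_norm_sq_add_two_mul_im_mul_norm_sub_sq hdense hΓ hΓs huv
  refine (sq_le_sq₀ (by positivity) (norm_nonneg _)).1 ?_
  rw [mul_pow, Real.sq_sqrt (by positivity)]
  nlinarith [sq_nonneg ‖Γs v‖]

section Resolvent

variable {z : ℂ} {R : X →L[ℂ] X} {G : X →L[ℂ] F}

theorem im_mul_norm_resolvent_apply_le
    (hΓs : ∀ v : A.adjoint.domain, ‖Γs v‖ ^ 2 = -(2 * (⟪(v : X), A.adjoint v⟫).im))
    (hR : IsResolventAt A.adjoint z R) (h : X) : z.im * ‖R h‖ ≤ ‖h‖ := by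
  obtain ⟨v, hv, rfl⟩ := hR.2 h
  rw [← hv]
  exact im_mul_norm_le_norm_adjoint_sub_smul hΓs z v

theorem sqrt_mul_norm_apply_le
    (hΓs : ∀ v : A.adjoint.domain, ‖Γs v‖ ^ 2 = -(2 * (⟪(v : X), A.adjoint v⟫).im))
    (hz : 0 ≤ z.im) (hR : IsResolventAt A.adjoint z R)
    (hG : ∀ v : A.adjoint.domain, G (A.adjoint v - z • (v : X)) = Γs v) (h : X) :
    √(2 * z.im) * ‖G h‖ ≤ ‖h‖ := by
  obtain ⟨v, -, rfl⟩ := hR.2 h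
  rw [hG]
  exact sqrt_mul_norm_le_norm_adjoint_sub_smul hΓs hz v

theorem norm_apply_sub_smul_le (hdense : Dense (A.domain : Set X))
    (hΓ : ∀ u : A.domain, ‖Γ u‖ ^ 2 = 2 * (⟪(u : X), A u⟫).im)
    (hΓs : ∀ v : A.adjoint.domain, ‖Γs v‖ ^ 2 = -(2 * (⟪(v : X), A.adjoint v⟫).im))
    (hz : 0 ≤ z.im) (hR : IsResolventAt A.adjoint z R)
    (hG : ∀ v : A.adjoint.domain, G (A.adjoint v - z • (v : X)) = Γs v) (u : A.domain) :
    ‖G (A u - z • (u : X))‖ ≤ ‖Γ u‖ := by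
  obtain ⟨v, -, hv⟩ := hR.2 (A u - z • (u : X))
  rw [← hv, hG]
  exact norm_le_norm_of_adjoint_sub_smul_eq hdense hΓ hΓs hz hv

theorem norm_apply_resolvent_sub_le (hdense : Dense (A.domain : Set X))
    (hΓ : ∀ u : A.domain, ‖Γ u‖ ^ 2 = 2 * (⟪(u : X), A u⟫).im)
    (hΓs : ∀ v : A.adjoint.domain, ‖Γs v‖ ^ 2 = -(2 * (⟪(v : X), A.adjoint v⟫).im))
    (hz : 0 < z.im) (hR : IsResolventAt A.adjoint z R)
    (hG : ∀ v : A.adjoint.domain, G (A.adjoint v - z • (v : X)) = Γs v) (u : A.domain) :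
    ‖G (R (A u - z • (u : X)) - u)‖ ≤ (2 * z.im)⁻¹ * ‖Γ u‖ := by
  obtain ⟨v, hvR, hv⟩ := hR.2 (A u - z • (u : X))
  rw [← hvR, inv_mul_eq_div, le_div_iff₀ (by positivity), mul_comm]
  calc 2 * z.im * ‖G (v - u)‖ = √(2 * z.im) * (√(2 * z.im) * ‖G (v - u)‖) := by
        rw [← mul_assoc, Real.mul_self_sqrt (by positivity)]
    _ ≤ √(2 * z.im) * ‖(v : X) - u‖ := by
        gcongr
        exact sqrt_mul_norm_apply_le hΓs hz.le hR hG _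
    _ = √(2 * z.im) * ‖(u : X) - v‖ := by rw [norm_sub_rev]
    _ ≤ ‖Γ u‖ := sqrt_mul_norm_sub_le_norm_of_adjoint_sub_smul_eq hdense hΓ hΓs hz.le hv

end Resolvent

theorem apply_sub_apply_sub_smul_apply_eq_sq_smul {w z : ℂ} {Gw Gz : X →L[ℂ] F}
    (hGw : ∀ v : A.adjoint.domain, Gw (A.adjoint v - w • (v : X)) = Γs v)
    (hGz : ∀ v : A.adjoint.domain, Gz (A.adjoint v - z • (v : X)) = Γs v)
    {u : A.domain} {vw p : A.adjoint.domain}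
    (hvw : A.adjoint vw - w • (vw : X) = A u - w • (u : X))
    (hp : A.adjoint p - z • (p : X) = vw - u) :
    Gz (A u - z • (u : X)) - Gw (A u - w • (u : X)) - (z - w) • Gw (vw - u)
      = (z - w) ^ 2 • Gw p := by
  have hz : A u - z • (u : X)
      = A.adjoint (vw + (z - w) • p) - z • ((vw + (z - w) • p : A.adjoint.domain) : X) := by
    rw [LinearPMap.map_add, LinearPMap.map_smul, Submodule.coe_add, Submodule.coe_smul]
    linear_combination (norm := module) -hvw - (z - w) • hp
  have hw : (vw : X) - u = (A.adjoint p - w • (p : X)) - (z - w) • (p : X) := by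
    rw [hp.symm]
    module
  rw [hz, hGz, ← hvw, hGw, hw, map_sub, hGw, map_smul, map_add, map_smul]
  module

theorem norm_apply_sub_apply_sub_smul_apply_le (hdense : Dense (A.domain : Set X))
    (hΓ : ∀ u : A.domain, ‖Γ u‖ ^ 2 = 2 * (⟪(u : X), A u⟫).im)
    (hΓs : ∀ v : A.adjoint.domain, ‖Γs v‖ ^ 2 = -(2 * (⟪(v : X), A.adjoint v⟫).im))
    {w z : ℂ} (hw : 0 < w.im) (hz : 0 < z.im) {Rw Rz : X →L[ℂ] X} {Gw Gz : X →L[ℂ] F}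
    (hRw : IsResolventAt A.adjoint w Rw) (hRz : IsResolventAt A.adjoint z Rz)
    (hGw : ∀ v : A.adjoint.domain, Gw (A.adjoint v - w • (v : X)) = Γs v)
    (hGz : ∀ v : A.adjoint.domain, Gz (A.adjoint v - z • (v : X)) = Γs v) (u : A.domain) :
    ‖Gz (A u - z • (u : X)) - Gw (A u - w • (u : X)) - (z - w) • Gw (Rw (A u - w • (u : X)) - u)‖
      ≤ ‖z - w‖ ^ 2 / (2 * w.im * z.im) * ‖Γ u‖ := by
  obtain ⟨vw, hvwR, hvw⟩ := hRw.2 (A u - w • (u : X))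
  obtain ⟨p, hpR, hp⟩ := hRz.2 ((vw : X) - u)
  rw [← hvwR, apply_sub_apply_sub_smul_apply_eq_sq_smul hGw hGz hvw hp, norm_smul, norm_pow,
    div_mul_eq_mul_div, le_div_iff₀ (by positivity), mul_assoc]
  gcongr
  calc ‖Gw p‖ * (2 * w.im * z.im)
        = √(2 * w.im) * (z.im * (√(2 * w.im) * ‖Gw p‖)) := by
          linear_combination (-(z.im * ‖Gw p‖)) * Real.mul_self_sqrt (by positivity : 0 ≤ 2 * w.im)
    _ ≤ √(2 * w.im) * (z.im * ‖(p : X)‖) := by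
        gcongr
        exact sqrt_mul_norm_apply_le hΓs hw.le hRw hGw _
    _ ≤ √(2 * w.im) * ‖(u : X) - vw‖ := by
        gcongr
        rw [norm_sub_rev, hpR]
        exact im_mul_norm_resolvent_apply_le hΓs hRz _
    _ ≤ ‖Γ u‖ := sqrt_mul_norm_sub_le_norm_of_adjoint_sub_smul_eq hdense hΓ hΓs hw.le hvw

variable [CompleteSpace F]

def strausFun (A : X →ₗ.[ℂ] X) (Γ : A.domain →ₗ[ℂ] E) (G : ℂ → X →L[ℂ] F) (z : ℂ) :
    E →L[ℂ] F :=
  ((G z).toLinearMap ∘ₗ (A.toFun - z • A.domain.subtype)).extendOfNorm Γ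

/-- Differentiating `(A* - z) v_z = (A - z) u` gives `v_z' = (A* - z)⁻¹ (v_z - u)`. -/
def strausFunDeriv (A : X →ₗ.[ℂ] X) (Γ : A.domain →ₗ[ℂ] E) (R : ℂ → X →L[ℂ] X)
    (G : ℂ → X →L[ℂ] F) (z : ℂ) : E →L[ℂ] F :=
  ((G z).toLinearMap ∘ₗ
    ((R z).toLinearMap ∘ₗ (A.toFun - z • A.domain.subtype) - A.domain.subtype)).extendOfNorm Γ

section Pointwise

variable {z : ℂ} {R : X →L[ℂ] X} {G : ℂ → X →L[ℂ] F}

theorem strausFun_apply (hdense : Dense (A.domain : Set X)) (hΓd : DenseRange Γ)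
    (hΓ : ∀ u : A.domain, ‖Γ u‖ ^ 2 = 2 * (⟪(u : X), A u⟫).im)
    (hΓs : ∀ v : A.adjoint.domain, ‖Γs v‖ ^ 2 = -(2 * (⟪(v : X), A.adjoint v⟫).im))
    (hz : 0 ≤ z.im) (hR : IsResolventAt A.adjoint z R)
    (hG : ∀ v : A.adjoint.domain, G z (A.adjoint v - z • (v : X)) = Γs v) (u : A.domain) :
    strausFun A Γ G z (Γ u) = G z (A u - z • (u : X)) :=
  LinearMap.extendOfNorm_eq hΓd
    ⟨1, fun u => (one_mul ‖Γ u‖).symm ▸ norm_apply_sub_smul_le hdense hΓ hΓs hz hR hG u⟩ u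

theorem norm_strausFun_le_one (hdense : Dense (A.domain : Set X)) (hΓd : DenseRange Γ)
    (hΓ : ∀ u : A.domain, ‖Γ u‖ ^ 2 = 2 * (⟪(u : X), A u⟫).im)
    (hΓs : ∀ v : A.adjoint.domain, ‖Γs v‖ ^ 2 = -(2 * (⟪(v : X), A.adjoint v⟫).im))
    (hz : 0 ≤ z.im) (hR : IsResolventAt A.adjoint z R)
    (hG : ∀ v : A.adjoint.domain, G z (A.adjoint v - z • (v : X)) = Γs v) :
    ‖strausFun A Γ G z‖ ≤ 1 :=
  LinearMap.opNorm_extendOfNorm_le hΓd zero_le_one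
    fun u => (one_mul ‖Γ u‖).symm ▸ norm_apply_sub_smul_le hdense hΓ hΓs hz hR hG u

theorem eq_strausFun_of_apply_eq (hdense : Dense (A.domain : Set X)) (hΓd : DenseRange Γ)
    (hΓ : ∀ u : A.domain, ‖Γ u‖ ^ 2 = 2 * (⟪(u : X), A u⟫).im)
    (hΓs : ∀ v : A.adjoint.domain, ‖Γs v‖ ^ 2 = -(2 * (⟪(v : X), A.adjoint v⟫).im))
    (hz : 0 ≤ z.im) (hR : IsResolventAt A.adjoint z R)
    (hG : ∀ v : A.adjoint.domain, G z (A.adjoint v - z • (v : X)) = Γs v) (T : E →L[ℂ] F)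
    (hT : ∀ u : A.domain, T (Γ u) = G z (A u - z • (u : X))) : T = strausFun A Γ G z :=
  (LinearMap.extendOfNorm_unique hΓd 1
    (fun u => (one_mul ‖Γ u‖).symm ▸ norm_apply_sub_smul_le hdense hΓ hΓs hz hR hG u) T
    (LinearMap.ext hT)).symm

end Pointwise

theorem strausFunDeriv_apply (hdense : Dense (A.domain : Set X)) (hΓd : DenseRange Γ)
    (hΓ : ∀ u : A.domain, ‖Γ u‖ ^ 2 = 2 * (⟪(u : X), A u⟫).im)
    (hΓs : ∀ v : A.adjoint.domain, ‖Γs v‖ ^ 2 = -(2 * (⟪(v : X), A.adjoint v⟫).im))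
    {z : ℂ} (hz : 0 < z.im) {R : ℂ → X →L[ℂ] X} {G : ℂ → X →L[ℂ] F}
    (hR : IsResolventAt A.adjoint z (R z))
    (hG : ∀ v : A.adjoint.domain, G z (A.adjoint v - z • (v : X)) = Γs v) (u : A.domain) :
    strausFunDeriv A Γ R G z (Γ u) = G z (R z (A u - z • (u : X)) - u) :=
  LinearMap.extendOfNorm_eq hΓd ⟨_, norm_apply_resolvent_sub_le hdense hΓ hΓs hz hR hG⟩ u

theorem norm_strausFun_sub_sub_smul_le (hdense : Dense (A.domain : Set X)) (hΓd : DenseRange Γ)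
    (hΓ : ∀ u : A.domain, ‖Γ u‖ ^ 2 = 2 * (⟪(u : X), A u⟫).im)
    (hΓs : ∀ v : A.adjoint.domain, ‖Γs v‖ ^ 2 = -(2 * (⟪(v : X), A.adjoint v⟫).im))
    {R : ℂ → X →L[ℂ] X} {G : ℂ → X →L[ℂ] F}
    (hR : ∀ z : ℂ, 0 < z.im → IsResolventAt A.adjoint z (R z))
    (hG : ∀ z : ℂ, 0 < z.im → ∀ v : A.adjoint.domain, G z (A.adjoint v - z • (v : X)) = Γs v)
    {w z : ℂ} (hw : 0 < w.im) (hz : 0 < z.im) :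
    ‖strausFun A Γ G z - strausFun A Γ G w - (z - w) • strausFunDeriv A Γ R G w‖
      ≤ ‖z - w‖ ^ 2 / (2 * w.im * z.im) := by
  refine (strausFun A Γ G z - _ - _).opNorm_le_of_denseRange hΓd (by positivity) fun u => ?_
  simp only [sub_apply, smul_apply,
    strausFun_apply hdense hΓd hΓ hΓs hz.le (hR z hz) (hG z hz),
    strausFun_apply hdense hΓd hΓ hΓs hw.le (hR w hw) (hG w hw),
    strausFunDeriv_apply hdense hΓd hΓ hΓs hw (hR w hw) (hG w hw)]
  exact norm_apply_sub_apply_sub_smul_apply_le hdense hΓ hΓs hw hz (hR w hw) (hR z hz)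
    (hG w hw) (hG z hz) u

theorem hasDerivAt_strausFun (hdense : Dense (A.domain : Set X)) (hΓd : DenseRange Γ)
    (hΓ : ∀ u : A.domain, ‖Γ u‖ ^ 2 = 2 * (⟪(u : X), A u⟫).im)
    (hΓs : ∀ v : A.adjoint.domain, ‖Γs v‖ ^ 2 = -(2 * (⟪(v : X), A.adjoint v⟫).im))
    {R : ℂ → X →L[ℂ] X} {G : ℂ → X →L[ℂ] F}
    (hR : ∀ z : ℂ, 0 < z.im → IsResolventAt A.adjoint z (R z))
    (hG : ∀ z : ℂ, 0 < z.im → ∀ v : A.adjoint.domain, G z (A.adjoint v - z • (v : X)) = Γs v)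
    {w : ℂ} (hw : 0 < w.im) :
    HasDerivAt (strausFun A Γ G) (strausFunDeriv A Γ R G w) w := by
  refine hasDerivAt_of_norm_sub_sub_smul_le_sq (C := (w.im ^ 2)⁻¹) ?_
  filter_upwards [continuous_im.continuousAt.eventually (lt_mem_nhds (half_lt_self hw))]
    with z hz
  have hz0 : 0 < z.im := (half_pos hw).trans hz
  calc _ ≤ ‖z - w‖ ^ 2 / (2 * w.im * z.im) :=
        norm_strausFun_sub_sub_smul_le hdense hΓd hΓ hΓs hR hG hw hz0
    _ ≤ ‖z - w‖ ^ 2 / w.im ^ 2 := by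
        gcongr
        nlinarith
    _ = (w.im ^ 2)⁻¹ * ‖z - w‖ ^ 2 := by ring

end Straus

theorem characteristic_function_exists_general
    {E Es : Type*} [NormedAddCommGroup E] [InnerProductSpace ℂ E]
    [NormedAddCommGroup Es] [InnerProductSpace ℂ Es] [CompleteSpace Es]
    (A : H →ₗ.[ℂ] H) (hA : IsMaxDissipative A)
    (Γ : A.domain →ₗ[ℂ] E) (Γs : A.adjoint.domain →ₗ[ℂ] Es)
    (hΓd : DenseRange Γ)
    (hLag : ∀ u v : A.domain, ⟪(v : H), A u⟫ - ⟪A v, (u : H)⟫ = Complex.I * ⟪Γ v, Γ u⟫)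
    (hLagS : ∀ u v : A.adjoint.domain,
      ⟪(v : H), A.adjoint u⟫ - ⟪A.adjoint v, (u : H)⟫ = -(Complex.I * ⟪Γs v, Γs u⟫))
    -- resolvents of `A*` in the upper half-plane and the maps `G z = Γ_* (A*-z)⁻¹`
    (RS : ℂ → H →L[ℂ] H) (hRS : ∀ z : ℂ, 0 < z.im → IsResolventAt A.adjoint z (RS z))
    (G : ℂ → H →L[ℂ] Es)
    (hG : ∀ z : ℂ, 0 < z.im → ∀ u : A.adjoint.domain, G z (A.adjoint u - z • (u : H)) = Γs u) :
    ∃ S : ℂ → E →L[ℂ] Es,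
      (∀ z : ℂ, 0 < z.im →
        ‖S z‖ ≤ 1 ∧
        (∀ u : A.domain, S z (Γ u) = G z (A u - z • (u : H))) ∧
        (∀ T : E →L[ℂ] Es, ‖T‖ ≤ 1 →
          (∀ u : A.domain, T (Γ u) = G z (A u - z • (u : H))) → T = S z)) ∧
      DifferentiableOn ℂ S {z : ℂ | 0 < z.im} := by
  have hdense : Dense (A.domain : Set H) := hA.1.1
  have hΓ (u : A.domain) : ‖Γ u‖ ^ 2 = 2 * (⟪(u : H), A u⟫).im :=
    norm_sq_eq_two_mul_im_inner_of_inner_sub_inner (hLag u u)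
  have hΓs (v : A.adjoint.domain) : ‖Γs v‖ ^ 2 = -(2 * (⟪(v : H), A.adjoint v⟫).im) := by
    rw [norm_sq_eq_two_mul_im_inner_of_inner_sub_inner (x := A.adjoint v) (y := v)
      (by rw [← neg_sub, hLagS v v, neg_neg]), ← inner_conj_symm (A.adjoint v) (v : H), conj_im]
    ring
  refine ⟨strausFun A Γ G, fun z hz => ⟨?_, ?_, fun T _ hT => ?_⟩, fun w hw => ?_⟩
  · exact norm_strausFun_le_one hdense hΓd hΓ hΓs hz.le (hRS z hz) (hG z hz)
  · exact strausFun_apply hdense hΓd hΓ hΓs hz.le (hRS z hz) (hG z hz)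
  · exact eq_strausFun_of_apply_eq hdense hΓd hΓ hΓs hz.le (hRS z hz) (hG z hz) T hT
  · exact (hasDerivAt_strausFun hdense hΓd hΓ hΓs hRS hG hw).differentiableAt.differentiableWithinAt

/-- Existence, uniqueness and analyticity of the Štraus characteristic function `S(z)`
on the upper half-plane: `S(z) Γ u = Γ_* (A*-z)⁻¹ (A-z) u`. -/
theorem characteristic_function_exists
    {E Es : Type*} [NormedAddCommGroup E] [InnerProductSpace ℂ E] [CompleteSpace E]
    [NormedAddCommGroup Es] [InnerProductSpace ℂ Es] [CompleteSpace Es]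
    (A : H →ₗ.[ℂ] H) (hA : IsMaxDissipative A)
    (Γ : A.domain →ₗ[ℂ] E) (Γs : A.adjoint.domain →ₗ[ℂ] Es)
    (hΓb : ∃ C : ℝ, ∀ u : A.domain, ‖Γ u‖ ≤ C * (‖(u : H)‖ + ‖A u‖))
    (hΓsb : ∃ C : ℝ, ∀ u : A.adjoint.domain, ‖Γs u‖ ≤ C * (‖(u : H)‖ + ‖A.adjoint u‖))
    (hΓd : DenseRange Γ) (hΓsd : DenseRange Γs)
    (hLag : ∀ u v : A.domain, ⟪(v : H), A u⟫ - ⟪A v, (u : H)⟫ = Complex.I * ⟪Γ v, Γ u⟫)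
    (hLagS : ∀ u v : A.adjoint.domain,
      ⟪(v : H), A.adjoint u⟫ - ⟪A.adjoint v, (u : H)⟫ = -(Complex.I * ⟪Γs v, Γs u⟫))
    -- resolvents of `A*` in the upper half-plane and the maps `G z = Γ_* (A*-z)⁻¹`
    (RS : ℂ → H →L[ℂ] H) (hRS : ∀ z : ℂ, 0 < z.im → IsResolventAt A.adjoint z (RS z))
    (G : ℂ → H →L[ℂ] Es)
    (hG : ∀ z : ℂ, 0 < z.im → ∀ u : A.adjoint.domain, G z (A.adjoint u - z • (u : H)) = Γs u) :
    ∃ S : ℂ → E →L[ℂ] Es,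
      (∀ z : ℂ, 0 < z.im →
        ‖S z‖ ≤ 1 ∧
        (∀ u : A.domain, S z (Γ u) = G z (A u - z • (u : H))) ∧
        (∀ T : E →L[ℂ] Es, ‖T‖ ≤ 1 →
          (∀ u : A.domain, T (Γ u) = G z (A u - z • (u : H))) → T = S z)) ∧
      DifferentiableOn ℂ S {z : ℂ | 0 < z.im} :=
  characteristic_function_exists_general A hA Γ Γs hΓd hLag hLagS RS hRS G hG
end
end

section
/- Let S be the characteristic function of a maximally dissipative operator A, defined by S(z)Γu = Γ_*(A*−z)^{-1}(A−z)u for u ∈ D(A), z ∈ ρ(A*). Then for μ, μ̃ ∈ ρ(A*): S(μ) − S(μ̃) = i(μ − μ̃)(Γ_*(A*−μ)^{-1})(Γ(A−μ̃̄)^{-1})* as operators on E. -/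
open Complex MeasureTheory

noncomputable section

variable {H : Type*} [NormedAddCommGroup H] [InnerProductSpace ℂ H] [CompleteSpace H]

local notation "⟪" x ", " y "⟫" => @inner ℂ _ _ x y

/-- The resolvent-difference identity for the characteristic function:
`S(μ) - S(μ̃) = i (μ - μ̃) (Γ_*(A*-μ)⁻¹)(Γ(A-μ̃̄)⁻¹)*` on `E`, for `μ, μ̃ ∈ ρ(A*)`. -/
theorem characteristic_function_difference
    {E Es : Type*} [NormedAddCommGroup E] [InnerProductSpace ℂ E] [CompleteSpace E]
    [NormedAddCommGroup Es] [InnerProductSpace ℂ Es] [CompleteSpace Es]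
    (A : H →ₗ.[ℂ] H) (hA : IsMaxDissipative A)
    (Γ : A.domain →ₗ[ℂ] E) (Γs : A.adjoint.domain →ₗ[ℂ] Es)
    (hΓd : DenseRange Γ) (hΓsd : DenseRange Γs)
    (hLag : ∀ u v : A.domain, ⟪(v : H), A u⟫ - ⟪A v, (u : H)⟫ = Complex.I * ⟪Γ v, Γ u⟫)
    (hLagS : ∀ u v : A.adjoint.domain,
      ⟪(v : H), A.adjoint u⟫ - ⟪A.adjoint v, (u : H)⟫ = -(Complex.I * ⟪Γs v, Γs u⟫))
    (mu nu : ℂ)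
    -- `μ, μ̃ ∈ ρ(A*)`, and the auxiliary resolvent of `A` at `μ̃̄ ∈ ρ(A)`
    (RSmu RSnu Rcnu : H →L[ℂ] H)
    (hRSmu : IsResolventAt A.adjoint mu RSmu)
    (hRSnu : IsResolventAt A.adjoint nu RSnu)
    (hRcnu : IsResolventAt A (starRingEnd ℂ nu) Rcnu)
    -- `Gsmu = Γ_*(A*-μ)⁻¹`, `Gsnu = Γ_*(A*-μ̃)⁻¹`, `Gcnu = Γ(A-μ̃̄)⁻¹`
    (Gsmu Gsnu : H →L[ℂ] Es) (Gcnu : H →L[ℂ] E)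
    (hGsmu : ∀ u : A.adjoint.domain, Gsmu (A.adjoint u - mu • (u : H)) = Γs u)
    (hGsnu : ∀ u : A.adjoint.domain, Gsnu (A.adjoint u - nu • (u : H)) = Γs u)
    (hGcnu : ∀ u : A.domain, Gcnu (A u - (starRingEnd ℂ nu) • (u : H)) = Γ u)
    -- the characteristic functions at `μ` and `μ̃`
    (Smu Snu : E →L[ℂ] Es)
    (hSmu : ∀ u : A.domain, Smu (Γ u) = Gsmu (A u - mu • (u : H)))
    (hSnu : ∀ u : A.domain, Snu (Γ u) = Gsnu (A u - nu • (u : H))) :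
    Smu - Snu = (Complex.I * (mu - nu)) • (Gsmu.comp (ContinuousLinearMap.adjoint Gcnu)) := by
  have hadj : ∀ (x : A.adjoint.domain) (y : A.domain),
      ⟪(A.adjoint x : H), (y : H)⟫ = ⟪(x : H), A y⟫ :=
    A.adjoint_isFormalAdjoint hA.1.1
  have main : ∀ u : A.domain,
      (Smu - Snu) (Γ u) =
        ((Complex.I * (mu - nu)) • (Gsmu.comp (ContinuousLinearMap.adjoint Gcnu))) (Γ u) := by
    intro u
    obtain ⟨w, hw1, hw2⟩ := hRSnu.2 (A u - nu • (u : H))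
    -- key vector identity
    have key : (ContinuousLinearMap.adjoint Gcnu) (Γ u)
        = Complex.I • ((u : H) - (w : H)) := by
      apply ext_inner_right ℂ
      intro h
      obtain ⟨v, hv1, hv2⟩ := hRcnu.2 h
      have hGh : Gcnu h = Γ v := by rw [← hv2, hGcnu]
      rw [ContinuousLinearMap.adjoint_inner_left, hGh, ← hv2]
      have e1 := hLag v u
      have e2 := hadj w v
      have hAw : (A.adjoint w : H) = A u - nu • (u : H) + nu • (w : H) := by
        rw [← hw2]; abel
      rw [hAw] at e2
      simp only [inner_sub_left, inner_sub_right, inner_add_left, inner_add_right,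
        inner_smul_left, inner_smul_right, Complex.conj_I] at e1 e2 ⊢
      linear_combination Complex.I * e1 + Complex.I * e2 +
        (⟪Γ u, Γ v⟫ : ℂ) * Complex.I_mul_I
    have hSnu' : Snu (Γ u) = Gsmu ((A u - nu • (u : H)) + (nu - mu) • (w : H)) := by
      have h1 : Snu (Γ u) = Γs w := by
        rw [hSnu u, ← hw2, hGsnu]
      have h2 : Gsmu (A.adjoint w - mu • (w : H)) = Γs w := hGsmu w
      rw [h1, ← h2]
      congr 1
      rw [← hw2]; module
    simp only [ContinuousLinearMap.sub_apply, ContinuousLinearMap.smul_apply,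
      ContinuousLinearMap.comp_apply, key, hSmu u, hSnu']
    have hI : Complex.I * (mu - nu) * Complex.I = nu - mu := by
      linear_combination (mu - nu) * Complex.I_mul_I
    rw [← map_sub, ContinuousLinearMap.map_smul, smul_smul, hI,
      ← ContinuousLinearMap.map_smul]
    congr 1
    module
  have hfun : ⇑(Smu - Snu)
      = ⇑((Complex.I * (mu - nu)) • (Gsmu.comp (ContinuousLinearMap.adjoint Gcnu))) :=
    hΓd.equalizer (Smu - Snu).continuous
      ((Complex.I * (mu - nu)) • (Gsmu.comp (ContinuousLinearMap.adjoint Gcnu))).continuous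
      (funext main)
  exact ContinuousLinearMap.ext fun x => congrFun hfun x
end
end

section
/- Let S be the characteristic function of a maximally dissipative operator A. For w, z ∈ ℂ₊: (1/(w̄ − z))(I_E − S*(w)S(z)) = i(Γ(A − w̄)^{-1})(Γ(A − z̄)^{-1})*. -/
open Complex MeasureTheory

noncomputable section

variable {H : Type*} [NormedAddCommGroup H] [InnerProductSpace ℂ H] [CompleteSpace H]

local notation "⟪" x ", " y "⟫" => @inner ℂ _ _ x y

/-- For `w, z ∈ ℂ₊`:
`(w̄ - z)⁻¹ (I_E - S*(w) S(z)) = i (Γ(A-w̄)⁻¹)(Γ(A-z̄)⁻¹)*`. -/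
theorem characteristic_function_SstarS
    {E Es : Type*} [NormedAddCommGroup E] [InnerProductSpace ℂ E] [CompleteSpace E]
    [NormedAddCommGroup Es] [InnerProductSpace ℂ Es] [CompleteSpace Es]
    (A : H →ₗ.[ℂ] H) (hA : IsMaxDissipative A)
    (Γ : A.domain →ₗ[ℂ] E) (Γs : A.adjoint.domain →ₗ[ℂ] Es)
    (hΓd : DenseRange Γ) (hΓsd : DenseRange Γs)
    (hLag : ∀ u v : A.domain, ⟪(v : H), A u⟫ - ⟪A v, (u : H)⟫ = Complex.I * ⟪Γ v, Γ u⟫)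
    (hLagS : ∀ u v : A.adjoint.domain,
      ⟪(v : H), A.adjoint u⟫ - ⟪A.adjoint v, (u : H)⟫ = -(Complex.I * ⟪Γs v, Γs u⟫))
    (w z : ℂ) (hw : 0 < w.im) (hz : 0 < z.im)
    -- resolvents: `w, z ∈ ℂ₊ ⊆ ρ(A*)` and `w̄, z̄ ∈ ℂ₋ ⊆ ρ(A)`
    (RSw RSz Rwc Rzc : H →L[ℂ] H)
    (hRSw : IsResolventAt A.adjoint w RSw) (hRSz : IsResolventAt A.adjoint z RSz)
    (hRwc : IsResolventAt A (starRingEnd ℂ w) Rwc)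
    (hRzc : IsResolventAt A (starRingEnd ℂ z) Rzc)
    -- `Gsw = Γ_*(A*-w)⁻¹`, `Gsz = Γ_*(A*-z)⁻¹`, `Gw = Γ(A-w̄)⁻¹`, `Gz = Γ(A-z̄)⁻¹`
    (Gsw Gsz : H →L[ℂ] Es) (Gw Gz : H →L[ℂ] E)
    (hGsw : ∀ u : A.adjoint.domain, Gsw (A.adjoint u - w • (u : H)) = Γs u)
    (hGsz : ∀ u : A.adjoint.domain, Gsz (A.adjoint u - z • (u : H)) = Γs u)
    (hGw : ∀ u : A.domain, Gw (A u - (starRingEnd ℂ w) • (u : H)) = Γ u)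
    (hGz : ∀ u : A.domain, Gz (A u - (starRingEnd ℂ z) • (u : H)) = Γ u)
    -- the characteristic functions `S(w), S(z)`
    (Sw Sz : E →L[ℂ] Es) (hSwc : ‖Sw‖ ≤ 1) (hSzc : ‖Sz‖ ≤ 1)
    (hSw : ∀ u : A.domain, Sw (Γ u) = Gsw (A u - w • (u : H)))
    (hSz : ∀ u : A.domain, Sz (Γ u) = Gsz (A u - z • (u : H))) :
    ((starRingEnd ℂ w) - z)⁻¹ • ((1 : E →L[ℂ] E) - (ContinuousLinearMap.adjoint Sw).comp Sz)
      = Complex.I • (Gw.comp (ContinuousLinearMap.adjoint Gz)) := by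
  classical
  have hdense : Dense (A.domain : Set H) := hA.1.1
  have hadj : ∀ (y : A.adjoint.domain) (x : A.domain),
      ⟪(A.adjoint y : H), (x : H)⟫ = ⟪(y : H), A x⟫ :=
    LinearPMap.adjoint_isFormalAdjoint hdense
  have hadj' : ∀ (x : A.domain) (y : A.adjoint.domain),
      ⟪A x, (y : H)⟫ = ⟪(x : H), A.adjoint y⟫ :=
    (LinearPMap.adjoint_isFormalAdjoint hdense).symm
  have him : ((starRingEnd ℂ) w - z).im < 0 := by
    simp only [Complex.sub_im, Complex.conj_im]
    linarith
  have hne : (starRingEnd ℂ) w - z ≠ 0 := by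
    intro h
    rw [h] at him
    simp at him
  set f := ((starRingEnd ℂ w) - z)⁻¹ •
    ((1 : E →L[ℂ] E) - (ContinuousLinearMap.adjoint Sw).comp Sz) with hf
  set g := Complex.I • (Gw.comp (ContinuousLinearMap.adjoint Gz)) with hg
  have key : ∀ u v : A.domain, ⟪Γ v, f (Γ u)⟫ = ⟪Γ v, g (Γ u)⟫ := by
    intro u v
    obtain ⟨p, hp1, hp2⟩ := hRSz.2 (A u - z • (u : H))
    obtain ⟨q, hq1, hq2⟩ := hRSw.2 (A v - w • (v : H))
    have hp2' : A.adjoint p = A u - z • (u : H) + z • (p : H) := eq_add_of_sub_eq hp2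
    have hq2' : A.adjoint q = A v - w • (v : H) + w • (q : H) := eq_add_of_sub_eq hq2
    have hSzu : Sz (Γ u) = Γs p := by rw [hSz, ← hp2, hGsz]
    have hSwv : Sw (Γ v) = Γs q := by rw [hSw, ← hq2, hGsw]
    -- the adjoint of Gz applied to Γ u
    have hGzadj : (ContinuousLinearMap.adjoint Gz) (Γ u)
        = Complex.I • ((u : H) - (p : H)) := by
      apply ext_inner_right ℂ
      intro h
      rw [ContinuousLinearMap.adjoint_inner_left]
      obtain ⟨r, hr1, hr2⟩ := hRzc.2 h
      rw [← hr2, hGz r]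
      have hL := hLag r u
      have hadj1 := hadj p r
      rw [hp2'] at hadj1
      simp only [inner_sub_left, inner_sub_right, inner_add_left, inner_smul_left,
        inner_smul_right, Complex.conj_I] at hadj1 ⊢
      linear_combination Complex.I * hL + Complex.I * hadj1 +
        (⟪Γ u, Γ r⟫ : ℂ) * Complex.I_mul_I
    obtain ⟨s, hs1, hs2⟩ := hRwc.2 ((u : H) - (p : H))
    have hs2' : A s = (u : H) - (p : H) + (starRingEnd ℂ w) • (s : H) :=
      eq_add_of_sub_eq hs2
    have hGws : Gw ((u : H) - (p : H)) = Γ s := by rw [← hs2, hGw]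
    -- now everything is explicit
    have E1 := hLag u v
    have E2 := hLagS p q
    have E3 := hLag s v
    have H1 := hadj q u
    have H2 := hadj' v p
    have H3 := hadj q s
    rw [hp2', hq2'] at E2
    rw [hs2'] at E3
    rw [hq2'] at H1
    rw [hp2'] at H2
    rw [hq2', hs2'] at H3
    simp only [inner_sub_left, inner_sub_right, inner_add_left, inner_add_right,
      inner_smul_left, inner_smul_right] at E2 E3 H1 H2 H3
    have main0 : Complex.I * ((⟪Γ v, Γ u⟫ : ℂ) - ⟪Γs q, Γs p⟫
        + ((starRingEnd ℂ) w - z) * ⟪Γ v, Γ s⟫) = 0 := by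
      linear_combination (-1 : ℂ) * E1 - E2 - ((starRingEnd ℂ) w - z) * E3
        - H1 - H2 - ((starRingEnd ℂ) w - z) * H3
    have hX : (⟪Γ v, Γ u⟫ : ℂ) - ⟪Γs q, Γs p⟫
        + ((starRingEnd ℂ) w - z) * ⟪Γ v, Γ s⟫ = 0 :=
      (mul_eq_zero.mp main0).resolve_left Complex.I_ne_zero
    rw [hf, hg]
    simp only [ContinuousLinearMap.smul_apply, ContinuousLinearMap.sub_apply,
      ContinuousLinearMap.one_apply, ContinuousLinearMap.comp_apply, hGzadj,
      _root_.map_smul, hGws, inner_smul_right, inner_sub_right]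
    rw [ContinuousLinearMap.adjoint_inner_right, hSwv, hSzu]
    field_simp
    linear_combination hX - ((starRingEnd ℂ) w - z) * (⟪Γ v, Γ s⟫ : ℂ) * Complex.I_mul_I
  have keyv : ∀ u : A.domain, f (Γ u) = g (Γ u) := by
    intro u
    apply ext_inner_left ℂ
    intro v
    have hc1 : Continuous fun e : E => (⟪e, f (Γ u)⟫ : ℂ) :=
      continuous_id.inner continuous_const
    have hc2 : Continuous fun e : E => (⟪e, g (Γ u)⟫ : ℂ) :=
      continuous_id.inner continuous_const
    have heq := Continuous.ext_on hΓd hc1 hc2 (by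
      rintro e ⟨v', rfl⟩
      exact key u v')
    exact congrFun heq v
  apply ContinuousLinearMap.coeFn_injective
  exact Continuous.ext_on hΓd f.continuous g.continuous (by
    rintro e ⟨u, rfl⟩
    exact keyv u)
end
end

section
/- Let A be maximally dissipative with characteristic functions S(z) : E → E_* (z ∈ ρ(A*)) and S_*(z) : E_* → E (z ∈ ρ(A)). Then S(z)S_*(z) = I_{E_*} and S_*(z)S(z) = I_E for every z ∈ ρ(A) ∩ ρ(A*). In particular, S(z) is unitary for z ∈ ℝ ∩ ρ(A). -/
open Complex MeasureTheory

noncomputable section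

variable {H : Type*} [NormedAddCommGroup H] [InnerProductSpace ℂ H] [CompleteSpace H]

local notation "⟪" x ", " y "⟫" => @inner ℂ _ _ x y

/-- For `z ∈ ρ(A) ∩ ρ(A*)` one has `S(z) S_*(z) = I` and `S_*(z) S(z) = I`;
in particular `S(z)` is unitary for real `z ∈ ρ(A)`. -/
theorem characteristic_function_inverse
    {E Es : Type*} [NormedAddCommGroup E] [InnerProductSpace ℂ E] [CompleteSpace E]
    [NormedAddCommGroup Es] [InnerProductSpace ℂ Es] [CompleteSpace Es]
    (A : H →ₗ.[ℂ] H) (hA : IsMaxDissipative A)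
    (Γ : A.domain →ₗ[ℂ] E) (Γs : A.adjoint.domain →ₗ[ℂ] Es)
    (hΓd : DenseRange Γ) (hΓsd : DenseRange Γs)
    (hLag : ∀ u v : A.domain, ⟪(v : H), A u⟫ - ⟪A v, (u : H)⟫ = Complex.I * ⟪Γ v, Γ u⟫)
    (hLagS : ∀ u v : A.adjoint.domain,
      ⟪(v : H), A.adjoint u⟫ - ⟪A.adjoint v, (u : H)⟫ = -(Complex.I * ⟪Γs v, Γs u⟫))
    (z : ℂ)
    -- `z ∈ ρ(A) ∩ ρ(A*)`
    (Rz RSz : H →L[ℂ] H)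
    (hRz : IsResolventAt A z Rz) (hRSz : IsResolventAt A.adjoint z RSz)
    -- `Gsz = Γ_*(A*-z)⁻¹` and `Gz = Γ(A-z)⁻¹`
    (Gsz : H →L[ℂ] Es) (Gz : H →L[ℂ] E)
    (hGsz : ∀ u : A.adjoint.domain, Gsz (A.adjoint u - z • (u : H)) = Γs u)
    (hGz : ∀ u : A.domain, Gz (A u - z • (u : H)) = Γ u)
    -- `S(z)` and `S_*(z)`
    (Sz : E →L[ℂ] Es) (Ssz : Es →L[ℂ] E) (hSzc : ‖Sz‖ ≤ 1) (hSszc : ‖Ssz‖ ≤ 1)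
    (hSz : ∀ u : A.domain, Sz (Γ u) = Gsz (A u - z • (u : H)))
    (hSsz : ∀ u : A.adjoint.domain, Ssz (Γs u) = Gz (A.adjoint u - z • (u : H))) :
    Sz.comp Ssz = 1 ∧ Ssz.comp Sz = 1 ∧
      (z.im = 0 →
        (ContinuousLinearMap.adjoint Sz).comp Sz = 1 ∧
        Sz.comp (ContinuousLinearMap.adjoint Sz) = 1) := by
  -- Ssz ∘ Sz = 1 on range Γ
  have h1 : ∀ u : A.domain, Ssz (Sz (Γ u)) = Γ u := by
    intro u
    obtain ⟨v, hv1, hv2⟩ := hRSz.2 (A u - z • (u : H))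
    rw [hSz u, ← hv2, hGsz v, hSsz v, hv2, hGz u]
  have h2 : ∀ w : A.adjoint.domain, Sz (Ssz (Γs w)) = Γs w := by
    intro w
    obtain ⟨u, hu1, hu2⟩ := hRz.2 (A.adjoint w - z • (w : H))
    rw [hSsz w, ← hu2, hGz u, hSz u, hu2, hGsz w]
  have e1 : Ssz.comp Sz = 1 := by
    have := hΓd.equalizer ((Ssz.comp Sz).continuous)
      (ContinuousLinearMap.id ℂ E).continuous (funext fun u => h1 u)
    exact ContinuousLinearMap.coeFn_injective this
  have e2 : Sz.comp Ssz = 1 := by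
    have := hΓsd.equalizer ((Sz.comp Ssz).continuous)
      (ContinuousLinearMap.id ℂ Es).continuous (funext fun u => h2 u)
    exact ContinuousLinearMap.coeFn_injective this
  refine ⟨e2, e1, fun _ => ?_⟩
  have hiso : ∀ x : E, ‖Sz x‖ = ‖x‖ := by
    intro x
    refine le_antisymm ?_ ?_
    · calc ‖Sz x‖ ≤ ‖Sz‖ * ‖x‖ := Sz.le_opNorm x
        _ ≤ 1 * ‖x‖ := by gcongr
        _ = ‖x‖ := one_mul _
    · calc ‖x‖ = ‖Ssz (Sz x)‖ := by
            have : Ssz (Sz x) = x := by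
              have := congrArg (fun f : E →L[ℂ] E => f x) e1
              simpa using this
            rw [this]
        _ ≤ ‖Ssz‖ * ‖Sz x‖ := Ssz.le_opNorm _
        _ ≤ 1 * ‖Sz x‖ := by gcongr
        _ = ‖Sz x‖ := one_mul _
  let f : E →ₗᵢ[ℂ] Es := ⟨Sz.toLinearMap, hiso⟩
  have hinner : ∀ x y : E, ⟪Sz x, Sz y⟫ = ⟪x, y⟫ := fun x y => f.inner_map_map x y
  have hadj : (ContinuousLinearMap.adjoint Sz).comp Sz = 1 := by
    ext x
    apply ext_inner_left ℂ
    intro y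
    simp only [ContinuousLinearMap.comp_apply, ContinuousLinearMap.adjoint_inner_right,
      ContinuousLinearMap.one_apply]
    exact hinner y x
  refine ⟨hadj, ?_⟩
  have hSszeq : ContinuousLinearMap.adjoint Sz = Ssz := by
    calc ContinuousLinearMap.adjoint Sz
        = (ContinuousLinearMap.adjoint Sz).comp (Sz.comp Ssz) := by rw [e2]; ext; simp
      _ = ((ContinuousLinearMap.adjoint Sz).comp Sz).comp Ssz := by
          ext; simp [ContinuousLinearMap.comp_apply]
      _ = Ssz := by rw [hadj]; ext; simp
  rw [hSszeq]; exact e2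
end
end

section
/- Let A be a maximally dissipative operator on H with boundary operator Γ. Then for every u ∈ H, sup_{ε>0} ∫_ℝ ‖Γ(A − k + iε)^{-1}u‖²_E dk ≤ 2π‖u‖²_H. Consequently, the E-valued analytic function z ↦ Γ(A − z)^{-1}u on the lower half-plane belongs to the vector-valued Hardy class H₂⁻(E). -/
/-!
For `v = (A - z)⁻¹ u` the Green identity gives `‖Γ v‖² = 2 Im ⟪v, A v⟫`, hence
`‖Γ (A - z)⁻¹ u‖² ≤ -2 Im m(z)` with `m(z) = ⟪u, (A - z)⁻¹ u⟫`. By dissipativity `m` is holomorphic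
on the lower half-plane with `Im m ≤ 0` and `|m(-it)| ≤ ‖u‖² / t`. Transporting the nonnegative
harmonic function `-Im m(· - iε)` to the unit disc by a Cayley transform, the mean value property on
the circles of radius `ρ < 1` and Fatou's lemma as `ρ → 1` give the Poisson inequality
`∫ -Im m(x - iε) · 2R / (x² + R²) dx ≤ 2π · (-Im m(-i(R + ε))) ≤ 2π ‖u‖² / (R + ε)`.
Multiplying by `R / 2` and letting `R → ∞` (Fatou again) yields `∫ -Im m(x - iε) dx ≤ π ‖u‖²`.
Holomorphy of `z ↦ Γ (A - z)⁻¹ u` comes from the resolvent identity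
`Γ (A - z)⁻¹ - Γ (A - w)⁻¹ = (z - w) Γ (A - z)⁻¹ (A - w)⁻¹` and the bound
`‖Γ (A - z)⁻¹‖² ≤ 2 / |Im z|`.
-/

open Complex MeasureTheory

noncomputable section

variable {H : Type*} [NormedAddCommGroup H] [InnerProductSpace ℂ H] [CompleteSpace H]

local notation "⟪" x ", " y "⟫" => @inner ℂ _ _ x y

open scoped Real
open Filter Topology Set Metric

theorem ofReal_sub_mul_I_ne_zero {R : ℝ} (hR : R ≠ 0) (x : ℝ) : (x : ℂ) - R * I ≠ 0 := by
  intro h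
  have := congrArg im h
  simp at this
  exact hR this

def diskToLowerHalfPlane (R : ℝ) (w : ℂ) : ℂ := -I * R * ((1 + w) / (1 - w))

theorem diskToLowerHalfPlane_zero (R : ℝ) : diskToLowerHalfPlane R 0 = -(R * I) := by
  simp [diskToLowerHalfPlane, mul_comm]

theorem im_diskToLowerHalfPlane (R : ℝ) (w : ℂ) :
    (diskToLowerHalfPlane R w).im = -R * ((1 - ‖w‖ ^ 2) / ‖1 - w‖ ^ 2) := by
  have hre : ((1 + w) / (1 - w)).re = (1 - ‖w‖ ^ 2) / ‖1 - w‖ ^ 2 := by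
    rw [div_re, normSq_eq_norm_sq (1 - w), ← add_div]
    congr 1
    simp only [add_re, sub_re, one_re, add_im, sub_im, one_im, Complex.sq_norm, normSq_apply]
    ring
  simp [diskToLowerHalfPlane, hre]

theorem im_diskToLowerHalfPlane_neg {R : ℝ} (hR : 0 < R) {w : ℂ} (hw : ‖w‖ < 1) :
    (diskToLowerHalfPlane R w).im < 0 := by
  have hw1 : 1 - w ≠ 0 := sub_ne_zero.2 (by rintro rfl; simp at hw)
  have hw2 : ‖w‖ ^ 2 < 1 := by nlinarith [norm_nonneg w]
  rw [im_diskToLowerHalfPlane, neg_mul, neg_lt_zero]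
  exact mul_pos hR (div_pos (by linarith) (pow_pos (norm_pos_iff.2 hw1) 2))

theorem differentiableAt_diskToLowerHalfPlane (R : ℝ) {w : ℂ} (hw : w ≠ 1) :
    DifferentiableAt ℂ (diskToLowerHalfPlane R) w := by
  unfold diskToLowerHalfPlane
  fun_prop (disch := exact sub_ne_zero.2 hw.symm)

/-- The inverse of `θ ↦ diskToLowerHalfPlane R (exp (θ * I)) = R * cot (θ / 2)` on `(0, 2π)`. -/
def boundaryAngle (R x : ℝ) : ℝ := π - 2 * Real.arctan (x / R)

theorem circleMap_boundaryAngle {R : ℝ} (hR : 0 < R) (x : ℝ) :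
    circleMap 0 1 (boundaryAngle R x) = (x + R * I) / (x - R * I) := by
  set a := Real.arctan (x / R)
  have hxc : (x : ℂ) * Real.cos a = R * Real.sin a := by
    have h := Real.tan_arctan (x / R)
    rw [Real.tan_eq_sin_div_cos] at h
    field_simp at h
    exact_mod_cast h.symm
  have hsc : (Real.sin a : ℂ) ^ 2 + Real.cos a ^ 2 = 1 := by
    exact_mod_cast Real.sin_sq_add_cos_sq a
  have hcos : Real.cos (boundaryAngle R x) = Real.sin a ^ 2 - Real.cos a ^ 2 := by
    rw [boundaryAngle, Real.cos_pi_sub, Real.cos_two_mul]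
    linarith [Real.sin_sq_add_cos_sq a]
  have hsin : Real.sin (boundaryAngle R x) = 2 * Real.sin a * Real.cos a := by
    rw [boundaryAngle, Real.sin_pi_sub, Real.sin_two_mul]
  rw [eq_div_iff (ofReal_sub_mul_I_ne_zero hR.ne' x), circleMap_zero, ofReal_one, one_mul,
    Complex.exp_mul_I, ← ofReal_cos, ← ofReal_sin, hcos, hsin]
  simp only [ofReal_sub, ofReal_pow, ofReal_mul, ofReal_ofNat]
  linear_combination (x + R * I) * hsc - (2 * Real.cos a - 2 * Real.sin a * I) * hxc
    - 2 * Real.sin a * Real.cos a * R * I_sq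

theorem circleMap_boundaryAngle_ne_one {R : ℝ} (hR : 0 < R) (x : ℝ) :
    circleMap 0 1 (boundaryAngle R x) ≠ 1 := by
  rw [circleMap_boundaryAngle hR, Ne, div_eq_one_iff_eq (ofReal_sub_mul_I_ne_zero hR.ne' x)]
  intro h
  have := congrArg im h
  simp at this
  linarith

theorem diskToLowerHalfPlane_circleMap_boundaryAngle {R : ℝ} (hR : 0 < R) (x : ℝ) :
    diskToLowerHalfPlane R (circleMap 0 1 (boundaryAngle R x)) = x := by
  have h := ofReal_sub_mul_I_ne_zero hR.ne' x
  have hR' : (R : ℂ) ≠ 0 := by exact_mod_cast hR.ne'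
  rw [circleMap_boundaryAngle hR, diskToLowerHalfPlane, one_add_div h, one_sub_div h,
    div_div_div_cancel_right₀ h, show (x : ℂ) - R * I + (x + R * I) = 2 * x by ring,
    show (x : ℂ) - R * I - (x + R * I) = -(2 * R * I) by ring]
  field_simp

theorem hasDerivAt_boundaryAngle {R : ℝ} (hR : R ≠ 0) (x : ℝ) :
    HasDerivAt (boundaryAngle R) (-(2 * R / (x ^ 2 + R ^ 2))) x := by
  refine ((((Real.hasDerivAt_arctan (x / R)).comp x ((hasDerivAt_id x).div_const R)).const_mul
    2).const_sub π).congr_deriv ?_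
  field_simp
  ring

theorem injective_boundaryAngle {R : ℝ} (hR : R ≠ 0) : Function.Injective (boundaryAngle R) := by
  intro x y hxy
  have h : Real.arctan (x / R) = Real.arctan (y / R) := by unfold boundaryAngle at hxy; linarith
  exact (div_left_inj' hR).1 (Real.arctan_injective h)

theorem range_boundaryAngle {R : ℝ} (hR : R ≠ 0) : range (boundaryAngle R) = Ioo 0 (2 * π) := by
  ext θ
  constructor
  · rintro ⟨x, rfl⟩
    have h1 := Real.arctan_lt_pi_div_two (x / R)
    have h2 := Real.neg_pi_div_two_lt_arctan (x / R)
    constructor <;> unfold boundaryAngle <;> linarith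
  · rintro ⟨h1, h2⟩
    refine ⟨R * Real.tan ((π - θ) / 2), ?_⟩
    rw [boundaryAngle, mul_div_cancel_left₀ _ hR, Real.arctan_tan (by linarith) (by linarith)]
    ring

theorem lintegral_comp_boundaryAngle {R : ℝ} (hR : 0 < R) (g : ℝ → ENNReal) :
    ∫⁻ x, ENNReal.ofReal (2 * R / (x ^ 2 + R ^ 2)) * g (boundaryAngle R x) =
      ∫⁻ θ in Ioo 0 (2 * π), g θ := by
  have h := lintegral_image_eq_lintegral_abs_deriv_mul MeasurableSet.univ
    (fun x _ => (hasDerivAt_boundaryAngle hR.ne' x).hasDerivWithinAt)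
    (injective_boundaryAngle hR.ne').injOn g
  rw [image_univ, range_boundaryAngle hR.ne', Measure.restrict_univ] at h
  rw [h]
  congr with x
  rw [abs_neg, abs_of_pos (by positivity)]

theorem circleMap_mem_ball_zero_one {ρ : ℝ} (hρ : ρ ∈ Ioo 0 1) (θ : ℝ) :
    circleMap 0 ρ θ ∈ ball (0 : ℂ) 1 := by
  simpa [abs_of_pos hρ.1] using hρ.2

theorem lintegral_neg_im_circleMap_eq {f : ℂ → ℂ} (hf : DifferentiableOn ℂ f (ball 0 1))
    (him : ∀ w ∈ ball (0 : ℂ) 1, (f w).im ≤ 0) {ρ : ℝ} (hρ : ρ ∈ Ioo 0 1) :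
    ∫⁻ θ in Ioo 0 (2 * π), ENNReal.ofReal (-(f (circleMap 0 ρ θ)).im) =
      ENNReal.ofReal (2 * π * -(f 0).im) := by
  have hharm : InnerProductSpace.HarmonicOnNhd (fun w => -(f w).im) (closedBall 0 |ρ|) :=
    fun w hw => ((hf.analyticOnNhd isOpen_ball) w
      (closedBall_subset_ball (by rw [abs_of_pos hρ.1]; exact hρ.2) hw)).harmonicAt_im.neg
  have hmean := hharm.circleAverage_eq
  rw [Real.circleAverage_def, smul_eq_mul, inv_mul_eq_iff_eq_mul₀ (by positivity),
    intervalIntegral.integral_of_le (by positivity), integral_Ioc_eq_integral_Ioo] at hmean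
  have hcont : Continuous fun θ => -(f (circleMap 0 ρ θ)).im :=
    (continuous_im.comp (hf.continuousOn.comp_continuous (continuous_circleMap 0 ρ)
      (circleMap_mem_ball_zero_one hρ))).neg
  rw [← hmean, ofReal_integral_eq_lintegral_ofReal
    (hcont.integrableOn_Icc.mono_set Ioo_subset_Icc_self)
    (ae_of_all _ fun θ => neg_nonneg.2 (him _ (circleMap_mem_ball_zero_one hρ θ)))]

theorem lintegral_neg_im_circleMap_le {f : ℂ → ℂ} (hf : DifferentiableOn ℂ f (ball 0 1))
    (him : ∀ w ∈ ball (0 : ℂ) 1, (f w).im ≤ 0)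
    (hcont : ∀ θ ∈ Ioo 0 (2 * π), ContinuousAt f (circleMap 0 1 θ)) :
    ∫⁻ θ in Ioo 0 (2 * π), ENNReal.ofReal (-(f (circleMap 0 1 θ)).im) ≤
      ENNReal.ofReal (2 * π * -(f 0).im) := by
  obtain ⟨ρ, -, hρ, hρ1⟩ := exists_seq_strictMono_tendsto' (zero_lt_one' ℝ)
  have hmeas (n : ℕ) : Measurable fun θ => ENNReal.ofReal (-(f (circleMap 0 (ρ n) θ)).im) :=
    (continuous_im.comp (hf.continuousOn.comp_continuous (continuous_circleMap 0 (ρ n))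
      (circleMap_mem_ball_zero_one (hρ n)))).neg.measurable.ennreal_ofReal
  have hlim : ∀ θ ∈ Ioo 0 (2 * π), Tendsto (fun n => ENNReal.ofReal (-(f (circleMap 0 (ρ n) θ)).im))
      atTop (𝓝 (ENNReal.ofReal (-(f (circleMap 0 1 θ)).im))) := by
    intro θ hθ
    have hradius : Tendsto (fun n => circleMap 0 (ρ n) θ) atTop (𝓝 (circleMap 0 1 θ)) := by
      simp only [circleMap_zero]
      exact ((continuous_ofReal.tendsto 1).comp hρ1).mul_const _
    exact (ENNReal.continuous_ofReal.tendsto _).comp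
      ((continuous_im.tendsto _).comp ((hcont θ hθ).tendsto.comp hradius)).neg
  calc ∫⁻ θ in Ioo 0 (2 * π), ENNReal.ofReal (-(f (circleMap 0 1 θ)).im)
      = ∫⁻ θ in Ioo 0 (2 * π), liminf (fun n => ENNReal.ofReal (-(f (circleMap 0 (ρ n) θ)).im))
          atTop :=
        setLIntegral_congr_fun measurableSet_Ioo fun θ hθ => (hlim θ hθ).liminf_eq.symm
    _ ≤ liminf (fun n => ∫⁻ θ in Ioo 0 (2 * π), ENNReal.ofReal (-(f (circleMap 0 (ρ n) θ)).im))
          atTop :=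
        lintegral_liminf_le hmeas
    _ = ENNReal.ofReal (2 * π * -(f 0).im) := by
        simp only [lintegral_neg_im_circleMap_eq hf him (hρ _), liminf_const]

theorem lintegral_poissonKernel_mul_neg_im_le {m : ℂ → ℂ}
    (hm : DifferentiableOn ℂ m {z | z.im < 0}) (him : ∀ z : ℂ, z.im < 0 → (m z).im ≤ 0)
    {ε R : ℝ} (hε : 0 < ε) (hR : 0 < R) :
    ∫⁻ x : ℝ, ENNReal.ofReal (2 * R / (x ^ 2 + R ^ 2)) * ENNReal.ofReal (-(m (x - ε * I)).im) ≤
      ENNReal.ofReal (2 * π * -(m (-((R + ε : ℝ) * I))).im) := by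
  set f : ℂ → ℂ := fun w => m (diskToLowerHalfPlane R w - ε * I)
  have hshift : ∀ w, (diskToLowerHalfPlane R w).im ≤ 0 →
      (diskToLowerHalfPlane R w - ε * I).im < 0 := fun w hw => by simp; linarith
  have hfAt : ∀ w, w ≠ 1 → (diskToLowerHalfPlane R w).im ≤ 0 → DifferentiableAt ℂ f w :=
    fun w hw1 hw => (hm.differentiableAt ((isOpen_lt continuous_im continuous_const).mem_nhds
      (hshift w hw))).comp w ((differentiableAt_diskToLowerHalfPlane R hw1).sub_const _)
  have hdisc : ∀ w ∈ ball (0 : ℂ) 1, w ≠ 1 ∧ (diskToLowerHalfPlane R w).im < 0 := fun w hw => by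
    rw [mem_ball_zero_iff] at hw
    exact ⟨by rintro rfl; simp at hw, im_diskToLowerHalfPlane_neg hR hw⟩
  have hboundary : ∀ θ ∈ Ioo 0 (2 * π), ContinuousAt f (circleMap 0 1 θ) := by
    rintro θ hθ
    obtain ⟨x, rfl⟩ := (range_boundaryAngle hR.ne').symm ▸ hθ
    refine (hfAt _ (circleMap_boundaryAngle_ne_one hR x) ?_).continuousAt
    rw [diskToLowerHalfPlane_circleMap_boundaryAngle hR, ofReal_im]
  have key := lintegral_neg_im_circleMap_le (f := f)
    (fun w hw => (hfAt w (hdisc w hw).1 (hdisc w hw).2.le).differentiableWithinAt)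
    (fun w hw => him _ (hshift w (hdisc w hw).2.le)) hboundary
  rw [← lintegral_comp_boundaryAngle hR] at key
  simp only [f, diskToLowerHalfPlane_circleMap_boundaryAngle hR, diskToLowerHalfPlane_zero] at key
  convert key using 5
  congr 1
  push_cast
  ring

theorem lintegral_cauchyKernel_mul_neg_im_le {m : ℂ → ℂ} {C ε R : ℝ}
    (hm : DifferentiableOn ℂ m {z | z.im < 0}) (him : ∀ z : ℂ, z.im < 0 → (m z).im ≤ 0)
    (hbd : ∀ t : ℝ, 0 < t → -(m (-(t * I))).im ≤ C / t) (hC : 0 ≤ C) (hε : 0 < ε) (hR : 0 < R) :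
    ∫⁻ x : ℝ, ENNReal.ofReal (1 / (1 + (x / R) ^ 2)) * ENNReal.ofReal (-(m (x - ε * I)).im) ≤
      ENNReal.ofReal (π * C) := by
  have hkernel (x : ℝ) : ENNReal.ofReal (1 / (1 + (x / R) ^ 2)) =
      ENNReal.ofReal (R / 2) * ENNReal.ofReal (2 * R / (x ^ 2 + R ^ 2)) := by
    rw [← ENNReal.ofReal_mul (by positivity)]
    congr 1
    field_simp
    ring
  simp_rw [hkernel, mul_assoc]
  rw [lintegral_const_mul' _ _ ENNReal.ofReal_ne_top]
  refine (mul_le_mul_right (lintegral_poissonKernel_mul_neg_im_le hm him hε hR) _).trans ?_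
  rw [← ENNReal.ofReal_mul (by positivity)]
  apply ENNReal.ofReal_le_ofReal
  calc R / 2 * (2 * π * -(m (-((R + ε : ℝ) * I))).im)
      = π * R * -(m (-((R + ε : ℝ) * I))).im := by ring
    _ ≤ π * R * (C / (R + ε)) := by gcongr; exact hbd (R + ε) (by positivity)
    _ ≤ π * C := by
      rw [mul_div_assoc', div_le_iff₀ (by positivity)]
      nlinarith [mul_nonneg (mul_nonneg Real.pi_pos.le hC) hε.le]

theorem lintegral_neg_im_le {m : ℂ → ℂ} {C ε : ℝ}
    (hm : DifferentiableOn ℂ m {z | z.im < 0}) (him : ∀ z : ℂ, z.im < 0 → (m z).im ≤ 0)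
    (hbd : ∀ t : ℝ, 0 < t → -(m (-(t * I))).im ≤ C / t) (hε : 0 < ε) :
    ∫⁻ x : ℝ, ENNReal.ofReal (-(m (x - ε * I)).im) ≤ ENNReal.ofReal (π * C) := by
  set w : ℝ → ℝ := fun x => -(m (x - ε * I)).im
  have hC : 0 ≤ C := by
    simpa using (neg_nonneg.2 (him (-(1 * I)) (by simp))).trans (hbd 1 one_pos)
  have hw : Continuous w := (continuous_im.comp (hm.continuousOn.comp_continuous (by fun_prop)
    fun x => by simp [hε])).neg
  have hlim (x : ℝ) : Tendsto (fun n : ℕ => ENNReal.ofReal (1 / (1 + (x / n) ^ 2)) *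
      ENNReal.ofReal (w x)) atTop (𝓝 (ENNReal.ofReal (w x))) := by
    have h : Tendsto (fun n : ℕ => 1 / (1 + (x / n) ^ 2)) atTop (𝓝 (1 / (1 + 0 ^ 2))) :=
      tendsto_const_nhds.div (tendsto_const_nhds.add
        ((tendsto_const_div_atTop_nhds_zero_nat x).pow 2)) (by norm_num)
    simpa using ENNReal.Tendsto.mul_const ((ENNReal.continuous_ofReal.tendsto _).comp h)
      (Or.inr ENNReal.ofReal_ne_top)
  calc ∫⁻ x, ENNReal.ofReal (w x)
      = ∫⁻ x, liminf (fun n : ℕ => ENNReal.ofReal (1 / (1 + (x / n) ^ 2)) *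
          ENNReal.ofReal (w x)) atTop :=
        lintegral_congr fun x => (hlim x).liminf_eq.symm
    _ ≤ liminf (fun n : ℕ => ∫⁻ x, ENNReal.ofReal (1 / (1 + (x / n) ^ 2)) *
          ENNReal.ofReal (w x)) atTop :=
        lintegral_liminf_le fun n => by fun_prop
    _ ≤ ENNReal.ofReal (π * C) :=
        liminf_le_of_frequently_le' ((eventually_gt_atTop 0).mono fun n hn =>
          lintegral_cauchyKernel_mul_neg_im_le hm him hbd hC hε (by exact_mod_cast hn)).frequently

section DifferenceQuotient

variable {X : Type*} [NormedAddCommGroup X] [NormedSpace ℂ X] {F D : ℂ → X} {w : ℂ}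

theorem continuousAt_of_sub_eq_smul (hFD : ∀ᶠ z in 𝓝 w, F z - F w = (z - w) • D z)
    (hD : IsBoundedUnder (· ≤ ·) (𝓝 w) (‖D ·‖)) : ContinuousAt F w := by
  have h : Tendsto (fun z => (z - w) • D z) (𝓝 w) (𝓝 0) :=
    (tendsto_sub_nhds_zero_iff.2 tendsto_id).zero_smul_isBoundedUnder_le hD
  exact tendsto_sub_nhds_zero_iff.1 (h.congr' (hFD.mono fun z hz => hz.symm))

theorem hasDerivAt_of_sub_eq_smul (hFD : ∀ᶠ z in 𝓝 w, F z - F w = (z - w) • D z)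
    (hD : ContinuousAt D w) : HasDerivAt F (D w) w := by
  rw [hasDerivAt_iff_tendsto_slope]
  refine (hD.tendsto.mono_left nhdsWithin_le_nhds).congr' ?_
  filter_upwards [nhdsWithin_le_nhds hFD, self_mem_nhdsWithin] with z hz hzw
  rw [slope_def_module, hz, smul_smul, inv_mul_cancel₀ (sub_ne_zero.2 hzw), one_smul]

end DifferenceQuotient

theorem eventually_im_neg {w : ℂ} (hw : w.im < 0) : ∀ᶠ z in 𝓝 w, z.im < 0 :=
  continuous_im.continuousAt.eventually_lt continuousAt_const hw

section Resolvent

variable {K E : Type*} [NormedAddCommGroup K] [InnerProductSpace ℂ K]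
  [NormedAddCommGroup E] [InnerProductSpace ℂ E]

/-- The identity `⟨Au,v⟩ - ⟨u,Av⟩ = i⟨Γu,Γv⟩` of the paper, whose inner product is linear in the
first slot. -/
def IsBoundaryOperator (A : K →ₗ.[ℂ] K) (Γ : A.domain →ₗ[ℂ] E) : Prop :=
  ∀ u v : A.domain, ⟪(v : K), A u⟫ - ⟪A v, (u : K)⟫ = I * ⟪Γ v, Γ u⟫

variable {A : K →ₗ.[ℂ] K} {Γ : A.domain →ₗ[ℂ] E} {z w : ℂ} {Rz Rw : K →L[ℂ] K} {Gz Gw : K →L[ℂ] E}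

theorem im_inner_sub_smul (v y : K) : (⟪v, y - z • v⟫).im = (⟪v, y⟫).im - z.im * ‖v‖ ^ 2 := by
  rw [inner_sub_right, inner_smul_right, inner_self_eq_norm_sq_to_K]
  simp [← ofReal_pow]

theorem map_sub_sub_smul_eq_of_eq {vz vw : A.domain} {h : K} (hvz : A vz - z • (vz : K) = h)
    (hvw : A vw - w • (vw : K) = h) :
    A (vz - vw) - z • ((vz - vw : A.domain) : K) = (z - w) • (vw : K) := by
  rw [LinearPMap.map_sub, Submodule.coe_sub, smul_sub, sub_smul]
  rw [sub_eq_iff_eq_add] at hvz hvw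
  rw [hvz, hvw]
  abel

theorem IsResolventAt.sub (hRz : IsResolventAt A z Rz) (hRw : IsResolventAt A w Rw) :
    Rz - Rw = (z - w) • Rz.comp Rw := by
  ext h
  obtain ⟨vz, hvzR, hvz⟩ := hRz.2 h
  obtain ⟨vw, hvwR, hvw⟩ := hRw.2 h
  simp only [sub_apply, smul_apply, ContinuousLinearMap.comp_apply, ← hvzR, ← hvwR]
  rw [← map_smul, ← map_sub_sub_smul_eq_of_eq hvz hvw, hRz.1]
  rfl

theorem boundaryResolvent_sub (hRz : IsResolventAt A z Rz) (hRw : IsResolventAt A w Rw)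
    (hGz : ∀ v : A.domain, Gz (A v - z • (v : K)) = Γ v)
    (hGw : ∀ v : A.domain, Gw (A v - w • (v : K)) = Γ v) : Gz - Gw = (z - w) • Gz.comp Rw := by
  ext h
  obtain ⟨vz, -, hvz⟩ := hRz.2 h
  obtain ⟨vw, hvwR, hvw⟩ := hRw.2 h
  simp only [sub_apply, smul_apply, ContinuousLinearMap.comp_apply, ← hvwR]
  rw [← map_smul, ← map_sub_sub_smul_eq_of_eq hvz hvw, hGz, map_sub, ← hGz vz, hvz, ← hGw vw, hvw]

theorem IsResolventAt.norm_le (hRz : IsResolventAt A z Rz)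
    (hdiss : ∀ v : A.domain, 0 ≤ (⟪(v : K), A v⟫).im) (hz : z.im < 0) : ‖Rz‖ ≤ (-z.im)⁻¹ := by
  refine ContinuousLinearMap.opNorm_le_bound _ (inv_nonneg.2 (by linarith)) fun h => ?_
  obtain ⟨v, hv, rfl⟩ := hRz.2 h
  rw [← hv, inv_mul_eq_div, le_div_iff₀ (by linarith)]
  have hcs := (im_le_norm _).trans (norm_inner_le_norm (𝕜 := ℂ) (v : K) (A v - z • (v : K)))
  rw [im_inner_sub_smul] at hcs
  rcases (norm_nonneg (v : K)).eq_or_lt with h0 | hpos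
  · simp [← h0]
  · exact le_of_mul_le_mul_left (by nlinarith [hdiss v]) hpos

theorem IsResolventAt.im_inner_nonpos (hRz : IsResolventAt A z Rz)
    (hdiss : ∀ v : A.domain, 0 ≤ (⟪(v : K), A v⟫).im) (hz : z.im ≤ 0) (h : K) :
    (⟪h, Rz h⟫).im ≤ 0 := by
  obtain ⟨v, hv, rfl⟩ := hRz.2 h
  rw [← hv, ← inner_conj_symm, conj_im, im_inner_sub_smul]
  nlinarith [hdiss v, sq_nonneg ‖(v : K)‖]

theorem IsResolventAt.neg_im_inner_le (hRz : IsResolventAt A z Rz)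
    (hdiss : ∀ v : A.domain, 0 ≤ (⟪(v : K), A v⟫).im) (hz : z.im < 0) (h : K) :
    -(⟪h, Rz h⟫).im ≤ ‖h‖ ^ 2 / -z.im :=
  calc -(⟪h, Rz h⟫).im ≤ ‖h‖ * (‖Rz‖ * ‖h‖) :=
        (neg_le_abs _).trans ((abs_im_le_norm _).trans ((norm_inner_le_norm _ _).trans
          (mul_le_mul_of_nonneg_left (Rz.le_opNorm h) (norm_nonneg h))))
    _ ≤ ‖h‖ * ((-z.im)⁻¹ * ‖h‖) := by gcongr; exact hRz.norm_le hdiss hz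
    _ = ‖h‖ ^ 2 / -z.im := by ring

namespace IsBoundaryOperator

theorem norm_sq_eq (hΓ : IsBoundaryOperator A Γ) (v : A.domain) :
    ‖Γ v‖ ^ 2 = 2 * (⟪(v : K), A v⟫).im := by
  have h := congrArg im (hΓ v v)
  rw [sub_im, I_mul_im] at h
  have hnorm : (⟪Γ v, Γ v⟫).re = ‖Γ v‖ ^ 2 := inner_self_eq_norm_sq (𝕜 := ℂ) _
  have hconj : (⟪(A v : K), (v : K)⟫).im = -(⟪(v : K), A v⟫).im := by
    rw [← inner_conj_symm, conj_im]
  linarith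

theorem norm_sq_boundaryResolvent_apply_eq (hΓ : IsBoundaryOperator A Γ)
    (hRz : IsResolventAt A z Rz) (hGz : ∀ v : A.domain, Gz (A v - z • (v : K)) = Γ v) (h : K) :
    ‖Gz h‖ ^ 2 = -2 * (⟪h, Rz h⟫).im + 2 * z.im * ‖Rz h‖ ^ 2 := by
  obtain ⟨v, -, rfl⟩ := hRz.2 h
  rw [hGz, hΓ.norm_sq_eq, hRz.1, ← inner_conj_symm (A v - z • (v : K)), conj_im,
    im_inner_sub_smul]
  ring

theorem norm_sq_boundaryResolvent_apply_le (hΓ : IsBoundaryOperator A Γ)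
    (hRz : IsResolventAt A z Rz) (hGz : ∀ v : A.domain, Gz (A v - z • (v : K)) = Γ v)
    (hz : z.im < 0) (h : K) : ‖Gz h‖ ^ 2 ≤ -2 * (⟪h, Rz h⟫).im := by
  rw [hΓ.norm_sq_boundaryResolvent_apply_eq hRz hGz]
  nlinarith [sq_nonneg ‖Rz h‖]

theorem norm_boundaryResolvent_le (hΓ : IsBoundaryOperator A Γ) (hRz : IsResolventAt A z Rz)
    (hGz : ∀ v : A.domain, Gz (A v - z • (v : K)) = Γ v)
    (hdiss : ∀ v : A.domain, 0 ≤ (⟪(v : K), A v⟫).im) (hz : z.im < 0) :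
    ‖Gz‖ ≤ √(2 * (-z.im)⁻¹) := by
  refine ContinuousLinearMap.opNorm_le_bound _ (Real.sqrt_nonneg _) fun h => ?_
  refine le_of_pow_le_pow_left₀ two_ne_zero (by positivity) ?_
  rw [mul_pow, Real.sq_sqrt (mul_nonneg zero_le_two (inv_nonneg.2 (by linarith)))]
  calc ‖Gz h‖ ^ 2 ≤ -2 * (⟪h, Rz h⟫).im := hΓ.norm_sq_boundaryResolvent_apply_le hRz hGz hz h
    _ ≤ 2 * (‖h‖ ^ 2 / -z.im) := by linarith [hRz.neg_im_inner_le hdiss hz h]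
    _ = 2 * (-z.im)⁻¹ * ‖h‖ ^ 2 := by ring

end IsBoundaryOperator

variable {R : ℂ → K →L[ℂ] K} {G : ℂ → K →L[ℂ] E}

theorem continuousAt_resolvent (hdiss : ∀ v : A.domain, 0 ≤ (⟪(v : K), A v⟫).im)
    (hR : ∀ z : ℂ, z.im < 0 → IsResolventAt A z (R z)) (hw : w.im < 0) : ContinuousAt R w := by
  refine continuousAt_of_sub_eq_smul ((eventually_im_neg hw).mono fun z hz =>
    (hR z hz).sub (hR w hw)) ?_
  have hb : ContinuousAt (fun z : ℂ => (-z.im)⁻¹ * ‖R w‖) w :=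
    ((continuous_im.continuousAt.neg).inv₀ (neg_ne_zero.2 hw.ne)).mul continuousAt_const
  refine hb.tendsto.isBoundedUnder_le.mono_le ((eventually_im_neg hw).mono fun z hz => ?_)
  exact (ContinuousLinearMap.opNorm_comp_le _ _).trans
    (mul_le_mul_of_nonneg_right ((hR z hz).norm_le hdiss hz) (norm_nonneg _))

theorem hasDerivAt_resolvent (hdiss : ∀ v : A.domain, 0 ≤ (⟪(v : K), A v⟫).im)
    (hR : ∀ z : ℂ, z.im < 0 → IsResolventAt A z (R z)) (hw : w.im < 0) :
    HasDerivAt R ((R w).comp (R w)) w :=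
  hasDerivAt_of_sub_eq_smul ((eventually_im_neg hw).mono fun z hz => (hR z hz).sub (hR w hw))
    ((continuousAt_resolvent hdiss hR hw).clm_comp continuousAt_const)

theorem differentiableOn_inner_resolvent (hdiss : ∀ v : A.domain, 0 ≤ (⟪(v : K), A v⟫).im)
    (hR : ∀ z : ℂ, z.im < 0 → IsResolventAt A z (R z)) (u : K) :
    DifferentiableOn ℂ (fun z => ⟪u, R z u⟫) {z | z.im < 0} := fun _ hw =>
  ((innerSL ℂ u).differentiableAt.comp _ ((hasDerivAt_resolvent hdiss hR
    hw).differentiableAt.clm_apply (differentiableAt_const u))).differentiableWithinAt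

theorem IsBoundaryOperator.continuousAt_boundaryResolvent (hΓ : IsBoundaryOperator A Γ)
    (hdiss : ∀ v : A.domain, 0 ≤ (⟪(v : K), A v⟫).im)
    (hR : ∀ z : ℂ, z.im < 0 → IsResolventAt A z (R z))
    (hG : ∀ z : ℂ, z.im < 0 → ∀ v : A.domain, G z (A v - z • (v : K)) = Γ v) (hw : w.im < 0) :
    ContinuousAt G w := by
  refine continuousAt_of_sub_eq_smul ((eventually_im_neg hw).mono fun z hz =>
    boundaryResolvent_sub (hR z hz) (hR w hw) (hG z hz) (hG w hw)) ?_
  have hb : ContinuousAt (fun z : ℂ => √(2 * (-z.im)⁻¹) * ‖R w‖) w :=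
    ((continuousAt_const.mul ((continuous_im.continuousAt.neg).inv₀
      (neg_ne_zero.2 hw.ne))).sqrt).mul continuousAt_const
  refine hb.tendsto.isBoundedUnder_le.mono_le ((eventually_im_neg hw).mono fun z hz => ?_)
  exact (ContinuousLinearMap.opNorm_comp_le _ _).trans
    (mul_le_mul_of_nonneg_right (hΓ.norm_boundaryResolvent_le (hR z hz) (hG z hz) hdiss hz)
      (norm_nonneg _))

theorem IsBoundaryOperator.hasDerivAt_boundaryResolvent (hΓ : IsBoundaryOperator A Γ)
    (hdiss : ∀ v : A.domain, 0 ≤ (⟪(v : K), A v⟫).im)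
    (hR : ∀ z : ℂ, z.im < 0 → IsResolventAt A z (R z))
    (hG : ∀ z : ℂ, z.im < 0 → ∀ v : A.domain, G z (A v - z • (v : K)) = Γ v) (hw : w.im < 0) :
    HasDerivAt G ((G w).comp (R w)) w :=
  hasDerivAt_of_sub_eq_smul ((eventually_im_neg hw).mono fun z hz =>
    boundaryResolvent_sub (hR z hz) (hR w hw) (hG z hz) (hG w hw))
    ((hΓ.continuousAt_boundaryResolvent hdiss hR hG hw).clm_comp continuousAt_const)

end Resolvent

theorem hardy_class_estimate_general
    {E : Type*} [NormedAddCommGroup E] [InnerProductSpace ℂ E]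
    (A : H →ₗ.[ℂ] H) (hA : IsMaxDissipative A)
    (Γ : A.domain →ₗ[ℂ] E)
    (hLag : ∀ u v : A.domain, ⟪(v : H), A u⟫ - ⟪A v, (u : H)⟫ = Complex.I * ⟪Γ v, Γ u⟫)
    (R : ℂ → H →L[ℂ] H) (hR : ∀ z : ℂ, z.im < 0 → IsResolventAt A z (R z))
    (G : ℂ → H →L[ℂ] E)   -- `G z = Γ (A - z)⁻¹`
    (hG : ∀ z : ℂ, z.im < 0 → ∀ u : A.domain, G z (A u - z • (u : H)) = Γ u)
    (u : H) :
    (∀ ε : ℝ, 0 < ε →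
      (∫⁻ k : ℝ, ENNReal.ofReal (‖G ((k : ℂ) - ε * Complex.I) u‖ ^ 2))
        ≤ ENNReal.ofReal (2 * Real.pi * ‖u‖ ^ 2)) ∧
    DifferentiableOn ℂ (fun z : ℂ => G z u) {z : ℂ | z.im < 0} := by
  have hΓ : IsBoundaryOperator A Γ := hLag
  have hdiss := hA.1.2
  refine ⟨fun ε hε => ?_, fun w hw => ((hΓ.hasDerivAt_boundaryResolvent hdiss hR hG
    hw).differentiableAt.clm_apply (differentiableAt_const u)).differentiableWithinAt⟩
  have hbd (t : ℝ) (ht : 0 < t) : -(⟪u, R (-(t * I)) u⟫).im ≤ ‖u‖ ^ 2 / t := by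
    have hz : (-(t * I)).im < 0 := by simpa using ht
    simpa using (hR _ hz).neg_im_inner_le hdiss hz u
  have hHardy := lintegral_neg_im_le (differentiableOn_inner_resolvent hdiss hR u)
    (fun z hz => (hR z hz).im_inner_nonpos hdiss hz.le u) hbd hε
  calc ∫⁻ k : ℝ, ENNReal.ofReal (‖G (k - ε * I) u‖ ^ 2)
      ≤ ∫⁻ k : ℝ, ENNReal.ofReal 2 * ENNReal.ofReal (-(⟪u, R (k - ε * I) u⟫).im) := by
        refine lintegral_mono fun k => ?_
        have hk : ((k : ℂ) - ε * I).im < 0 := by simpa using hε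
        rw [← ENNReal.ofReal_mul zero_le_two]
        exact ENNReal.ofReal_le_ofReal
          (by linarith [hΓ.norm_sq_boundaryResolvent_apply_le (hR _ hk) (hG _ hk) hk u])
    _ = ENNReal.ofReal 2 * ∫⁻ k : ℝ, ENNReal.ofReal (-(⟪u, R (k - ε * I) u⟫).im) :=
        lintegral_const_mul' _ _ ENNReal.ofReal_ne_top
    _ ≤ ENNReal.ofReal 2 * ENNReal.ofReal (π * ‖u‖ ^ 2) := by gcongr
    _ = ENNReal.ofReal (2 * π * ‖u‖ ^ 2) := by rw [← ENNReal.ofReal_mul zero_le_two, mul_assoc]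

/-- Hardy-class estimate: `sup_{ε>0} ∫_ℝ ‖Γ(A-k+iε)⁻¹ u‖² dk ≤ 2π ‖u‖²`, and
`z ↦ Γ(A-z)⁻¹ u` is analytic on the lower half-plane (so it lies in `H₂⁻(E)`). -/
theorem hardy_class_estimate
    {E : Type*} [NormedAddCommGroup E] [InnerProductSpace ℂ E] [CompleteSpace E]
    (A : H →ₗ.[ℂ] H) (hA : IsMaxDissipative A)
    (Γ : A.domain →ₗ[ℂ] E)
    (hΓb : ∃ C : ℝ, ∀ u : A.domain, ‖Γ u‖ ≤ C * (‖(u : H)‖ + ‖A u‖))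
    (hΓd : DenseRange Γ)
    (hLag : ∀ u v : A.domain, ⟪(v : H), A u⟫ - ⟪A v, (u : H)⟫ = Complex.I * ⟪Γ v, Γ u⟫)
    (R : ℂ → H →L[ℂ] H) (hR : ∀ z : ℂ, z.im < 0 → IsResolventAt A z (R z))
    (G : ℂ → H →L[ℂ] E)   -- `G z = Γ (A - z)⁻¹`
    (hG : ∀ z : ℂ, z.im < 0 → ∀ u : A.domain, G z (A u - z • (u : H)) = Γ u)
    (u : H) :
    (∀ ε : ℝ, 0 < ε →
      (∫⁻ k : ℝ, ENNReal.ofReal (‖G ((k : ℂ) - ε * Complex.I) u‖ ^ 2))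
        ≤ ENNReal.ofReal (2 * Real.pi * ‖u‖ ^ 2)) ∧
    DifferentiableOn ℂ (fun z : ℂ => G z u) {z : ℂ | z.im < 0} :=
  hardy_class_estimate_general A hA Γ hLag R hR G hG u
end
end

section
/- Let A be a maximally dissipative operator on H with boundary operators Γ, Γ_*. The reducing subspace of A corresponding to its completely non-selfadjoint part equals the closed linear span H_cns = span{ (Γ(A+λ)^{-1})*E : Im λ > 0 } ∨ span{ (Γ_*(A*+μ)^{-1})*E_* : Im μ < 0 }, and A restricted to the orthogonal complement H ⊖ H_cns is selfadjoint. -/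
open Complex MeasureTheory

noncomputable section

variable {H : Type*} [NormedAddCommGroup H] [InnerProductSpace ℂ H] [CompleteSpace H]

local notation "⟪" x ", " y "⟫" => @inner ℂ _ _ x y

open Filter Topology ComplexConjugate

/-! Write `Gp λ = Γ(A+λ)⁻¹` and `Gm μ = Γ_*(A*+μ)⁻¹`. Since `(ran T*)ᗮ = ker T`, the complement
`Kᗮ` of `H_cns` is the common kernel `N` of all `Gp λ` (`Im λ > 0`) and `Gm μ` (`Im μ < 0`).
Replacing `(A*, μ)` by `(-A*, -μ)` gives the second family the shape of the first, so both are
handled by one argument about a dissipative `T` with `G λ (T u + λ u) = L u`.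

The Lagrange identities show that on `ker Γ` the operator `A` is symmetric and agrees with `A*`,
and `Γ_*` vanishes there; conversely, by maximal dissipativity, `ker Γ_* ⊆ D(A)`. Together with
the resolvent identity this shows that `(A+λ)⁻¹` and `(A*+μ)⁻¹` map `N` into itself, and by
duality `(A+i)⁻¹` maps `K = Nᗮ` into itself. A closed subspace which, with its complement, is
invariant under `(A+i)⁻¹` reduces `A`. On `N` we have `Γ = 0`, so `A` is symmetric there, and
`A ± i` map `N ∩ D(A)` onto `N`: the part of `A` in `N` is selfadjoint. -/

section InnerProduct

variable {V : Type*} [NormedAddCommGroup V] [InnerProductSpace ℂ V]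

theorem im_mul_norm_le_norm_add_smul {x a : V} (c : ℂ) (h : 0 ≤ (⟪x, a⟫).im) :
    c.im * ‖x‖ ≤ ‖a + c • x‖ := by
  rcases (norm_nonneg x).eq_or_lt with hx | hx
  · rw [← hx, mul_zero]
    exact norm_nonneg _
  have key : ‖x‖ * (c.im * ‖x‖) ≤ ‖x‖ * ‖a + c • x‖ := calc
    ‖x‖ * (c.im * ‖x‖) ≤ (⟪x, a + c • x⟫).im := by
      have : (⟪x, a + c • x⟫).im = (⟪x, a⟫).im + c.im * ‖x‖ ^ 2 := by
        simp [inner_self_eq_norm_sq_to_K, ← ofReal_pow]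
      nlinarith
    _ ≤ ‖⟪x, a + c • x⟫‖ := Complex.im_le_norm _
    _ ≤ ‖x‖ * ‖a + c • x‖ := norm_inner_le_norm _ _
  exact le_of_mul_le_mul_left key hx

theorem im_inner_add_smul_add_smul {a b y z : V} (c : ℂ) (h : ⟪y, b⟫ = ⟪z, a⟫) :
    (⟪a + c • y, b + c • z⟫).im = (⟪a, b⟫).im + normSq c * (⟪y, z⟫).im := by
  rw [← inner_conj_symm z a] at h
  simp only [inner_add_left, inner_add_right, inner_smul_left, inner_smul_right, h, add_im,
    mul_im, add_re, mul_re, conj_re, conj_im, normSq_apply]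
  ring

variable {E : Type*} [NormedAddCommGroup E] [InnerProductSpace ℂ E] {T : V →ₗ.[ℂ] V}
  {L : T.domain →ₗ[ℂ] E}

theorem two_mul_im_inner_eq_of_lagrange
    (hLag : ∀ u v : T.domain, ⟪(v : V), T u⟫ - ⟪T v, (u : V)⟫ = I * ⟪L v, L u⟫) (u : T.domain) :
    2 * (⟪(u : V), T u⟫).im = ‖L u‖ ^ 2 := by
  have h := hLag u u
  rw [← inner_conj_symm (T u), sub_conj, inner_self_eq_norm_sq_to_K, mul_comm I] at h
  simpa [← ofReal_pow] using congrArg re (mul_right_cancel₀ I_ne_zero h)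

theorem lagrange_neg
    (hLag : ∀ u v : T.domain, ⟪(v : V), T u⟫ - ⟪T v, (u : V)⟫ = -(I * ⟪L v, L u⟫))
    (u v : (-T).domain) : ⟪(v : V), (-T) u⟫ - ⟪(-T) v, (u : V)⟫ = I * ⟪L v, L u⟫ := by
  rw [LinearPMap.neg_apply, LinearPMap.neg_apply, inner_neg_right, inner_neg_left, neg_sub_neg,
    ← neg_sub, hLag, neg_neg]

theorem inner_apply_eq_of_boundary_eq_zero
    (hLag : ∀ u v : T.domain, ⟪(v : V), T u⟫ - ⟪T v, (u : V)⟫ = I * ⟪L v, L u⟫) {u : T.domain}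
    (hu : L u = 0) (v : T.domain) : ⟪T u, (v : V)⟫ = ⟪(u : V), T v⟫ := by
  have h := hLag v u
  rw [hu, inner_zero_left, mul_zero, sub_eq_zero] at h
  exact h.symm

end InnerProduct

theorem map_eq_zero_of_add_smul_eq {𝕜 M N Φ : Type*} [Field 𝕜] [AddCommGroup M] [Module 𝕜 M]
    [AddCommGroup N] [Module 𝕜 N] [FunLike Φ M N] [LinearMapClass Φ 𝕜 M N] (f : Φ) {a x w : M}
    {c ν : 𝕜} (hν : f (a + ν • x) = 0) (hw : f w = 0) (hc : a + c • x = w) (hne : c ≠ ν) :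
    f x = 0 := by
  have : a + ν • x = w + (ν - c) • x := by rw [← hc, sub_smul]; abel
  rw [this, map_add, hw, zero_add, map_smul] at hν
  exact (smul_eq_zero.mp hν).resolve_left (sub_ne_zero.mpr hne.symm)

section BoundaryResolvent

variable {V F F₂ : Type*} [NormedAddCommGroup V] [InnerProductSpace ℂ V]
  [NormedAddCommGroup F] [NormedSpace ℂ F] [NormedAddCommGroup F₂] [NormedSpace ℂ F₂]

def upperKer (G : ℂ → V →L[ℂ] F) : Submodule ℂ V :=
  ⨅ lam ∈ {z : ℂ | 0 < z.im}, (G lam).ker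

theorem mem_upperKer {G : ℂ → V →L[ℂ] F} {w : V} :
    w ∈ upperKer G ↔ ∀ lam : ℂ, 0 < lam.im → G lam w = 0 := by
  simp [upperKer]

/-- Encodes `G λ = L (T + λ)⁻¹` on the upper half-plane `Im λ > 0`. -/
structure IsBoundaryResolvent (T : V →ₗ.[ℂ] V) (L : T.domain →ₗ[ℂ] F) (G : ℂ → V →L[ℂ] F) :
    Prop where
  im_inner_nonneg : ∀ u : T.domain, 0 ≤ (⟪(u : V), T u⟫).im
  exists_add_smul_eq : ∀ lam : ℂ, 0 < lam.im → ∀ h : V, ∃ u : T.domain, T u + lam • (u : V) = h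
  apply_add_smul : ∀ lam : ℂ, 0 < lam.im → ∀ u : T.domain, G lam (T u + lam • (u : V)) = L u

namespace IsBoundaryResolvent

variable {T : V →ₗ.[ℂ] V} {L : T.domain →ₗ[ℂ] F} {G : ℂ → V →L[ℂ] F}
  {T₂ : V →ₗ.[ℂ] V} {L₂ : T₂.domain →ₗ[ℂ] F₂} {G₂ : ℂ → V →L[ℂ] F₂}

theorem apply_eq_zero_of_forall_ne (P : IsBoundaryResolvent T L G) {x : V} {lam : ℂ}
    (hlam : 0 < lam.im) (hx : ∀ ν : ℂ, 0 < ν.im → ν ≠ lam → G ν x = 0) : G lam x = 0 := by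
  -- Perturb `λ` to `ν = λ + t i`, where `G ν x = 0` is known, and let `t → 0⁺`.
  have hbound : ∀ t : ℝ, 0 < t → ‖G lam x‖ ≤ t * (‖G lam‖ * ‖x‖ / lam.im) := by
    intro t ht
    set ν := lam + t * I
    have hνim : ν.im = lam.im + t := by simp [ν]
    have hν : 0 < ν.im := by linarith
    obtain ⟨p, hp⟩ := P.exists_add_smul_eq ν hν x
    have hLp : L p = 0 := by
      rw [← P.apply_add_smul ν hν, hp, hx ν hν (by simpa [ν] using ht.ne')]
    have hGx : G lam x = (t * I) • G lam p := by
      have h := P.apply_add_smul lam hlam p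
      rw [hLp, show T p + lam • (p : V) = x - (t * I) • (p : V) by rw [← hp]; module, map_sub,
        map_smul, sub_eq_zero] at h
      exact h
    have hp_le : ‖(p : V)‖ ≤ ‖x‖ / lam.im := by
      rw [le_div_iff₀ hlam, mul_comm]
      have := im_mul_norm_le_norm_add_smul ν (P.im_inner_nonneg p)
      rw [hp] at this
      nlinarith [norm_nonneg (p : V)]
    calc ‖G lam x‖ = t * ‖G lam p‖ := by
          rw [hGx, norm_smul, norm_mul, norm_I, mul_one, norm_real, Real.norm_of_nonneg ht.le]
      _ ≤ t * (‖G lam‖ * (‖x‖ / lam.im)) := by gcongr; exact (G lam).le_opNorm_of_le hp_le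
      _ = t * (‖G lam‖ * ‖x‖ / lam.im) := by ring
  have hlim : Tendsto (fun t : ℝ => t * (‖G lam‖ * ‖x‖ / lam.im)) (𝓝[>] 0) (𝓝 0) :=
    ((continuous_mul_const _).tendsto' 0 0 (zero_mul _)).mono_left nhdsWithin_le_nhds
  exact norm_le_zero_iff.mp <| ge_of_tendsto hlim <| eventually_nhdsWithin_of_forall hbound

theorem mem_upperKer_of_add_smul_eq (P : IsBoundaryResolvent T L G) {w : V}
    (hw : w ∈ upperKer G) {lam : ℂ} (hlam : 0 < lam.im) {x : T.domain}
    (hx : T x + lam • (x : V) = w) : L x = 0 ∧ (x : V) ∈ upperKer G := by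
  rw [mem_upperKer] at hw ⊢
  have hLx : L x = 0 := by rw [← P.apply_add_smul lam hlam, hx, hw lam hlam]
  have hne : ∀ ν : ℂ, 0 < ν.im → ν ≠ lam → G ν x = 0 := fun ν hν hne =>
    map_eq_zero_of_add_smul_eq (G ν) (by rw [P.apply_add_smul ν hν, hLx]) (hw ν hν) hx hne.symm
  refine ⟨hLx, fun ν hν => ?_⟩
  rcases eq_or_ne ν lam with rfl | h
  · exact P.apply_eq_zero_of_forall_ne hν hne
  · exact hne ν hν h

theorem mem_upperKer_inf_of_add_smul_eq (P : IsBoundaryResolvent T L G)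
    (P₂ : IsBoundaryResolvent T₂ L₂ G₂)
    (htransfer : ∀ x : T.domain, L x = 0 → ∃ y : T₂.domain, (y : V) = x ∧ T₂ y = -T x ∧ L₂ y = 0)
    {w : V} (hw : w ∈ upperKer G ⊓ upperKer G₂) {lam : ℂ} (hlam : 0 < lam.im) {x : T.domain}
    (hx : T x + lam • (x : V) = w) : L x = 0 ∧ (x : V) ∈ upperKer G ⊓ upperKer G₂ := by
  obtain ⟨hLx, hxG⟩ := P.mem_upperKer_of_add_smul_eq hw.1 hlam hx
  obtain ⟨y, hyx, hTy, hLy⟩ := htransfer x hLx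
  refine ⟨hLx, hxG, mem_upperKer.mpr fun ν hν => hyx ▸ ?_⟩
  refine map_eq_zero_of_add_smul_eq (G₂ ν) (c := -lam) (w := -w)
    (by rw [P₂.apply_add_smul ν hν, hLy]) (by rw [map_neg, mem_upperKer.mp hw.2 ν hν, neg_zero])
    (by rw [hTy, hyx, ← hx]; module) fun h => ?_
  have := congrArg im h
  simp only [neg_im] at this
  linarith

end IsBoundaryResolvent

end BoundaryResolvent

theorem IsResolventAt.exists_add_smul_eq {V : Type*} [NormedAddCommGroup V]
    [InnerProductSpace ℂ V] {A : V →ₗ.[ℂ] V} {c : ℂ} {R : V →L[ℂ] V}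
    (hR : IsResolventAt A (-c) R) (h : V) : ∃ u : A.domain, A u + c • (u : V) = h := by
  obtain ⟨u, -, hu⟩ := hR.2 h
  exact ⟨u, by rwa [neg_smul, sub_neg_eq_add] at hu⟩

section Reducing

variable {V : Type*} [NormedAddCommGroup V] [InnerProductSpace ℂ V] {A : V →ₗ.[ℂ] V}
  {K : Submodule ℂ V}

theorem exists_decomposition_of_add_smul [K.HasOrthogonalProjection] {c : ℂ}
    (hsurj : ∀ h : V, ∃ x : A.domain, A x + c • (x : V) = h)
    (hK : ∀ x : A.domain, A x + c • (x : V) ∈ K → (x : V) ∈ K)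
    (hKperp : ∀ x : A.domain, A x + c • (x : V) ∈ Kᗮ → (x : V) ∈ Kᗮ) (u : A.domain) :
    ∃ v : A.domain, (v : V) ∈ K ∧ A v ∈ K ∧ ((u - v : A.domain) : V) ∈ Kᗮ ∧ A (u - v) ∈ Kᗮ := by
  obtain ⟨h₁, hh₁, h₂, hh₂, hsum⟩ := K.exists_add_mem_mem_orthogonal (A u + c • (u : V))
  obtain ⟨v, hv⟩ := hsurj h₁
  have hsub : A (u - v) + c • ((u - v : A.domain) : V) = h₂ := by
    rw [LinearPMap.map_sub, Submodule.coe_sub, smul_sub, sub_add_sub_comm, hsum, hv]; abel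
  have hvK := hK v (hv ▸ hh₁)
  have huvK := hKperp _ (hsub ▸ hh₂)
  refine ⟨v, hvK, ?_, huvK, ?_⟩
  · rw [show A v = h₁ - c • (v : V) by rw [← hv]; abel]
    exact K.sub_mem hh₁ (K.smul_mem c hvK)
  · rw [show A (u - v) = h₂ - c • ((u - v : A.domain) : V) by rw [← hsub]; abel]
    exact Kᗮ.sub_mem hh₂ (Kᗮ.smul_mem c huvK)

theorem reduces_of_resolvent_invariant [K.HasOrthogonalProjection] {c : ℂ}
    (hsurj : ∀ h : V, ∃ x : A.domain, A x + c • (x : V) = h)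
    (hK : ∀ x : A.domain, A x + c • (x : V) ∈ K → (x : V) ∈ K)
    (hKperp : ∀ x : A.domain, A x + c • (x : V) ∈ Kᗮ → (x : V) ∈ Kᗮ) :
    (∀ u : A.domain, ∃ v : A.domain, (v : V) ∈ K ∧ (u : V) - (v : V) ∈ Kᗮ) ∧
    (∀ u : A.domain, (u : V) ∈ K → A u ∈ K) ∧
    (∀ u : A.domain, (u : V) ∈ Kᗮ → A u ∈ Kᗮ) := by
  have hdec := exists_decomposition_of_add_smul hsurj hK hKperp
  have hzero : ∀ {x : A.domain}, (x : V) ∈ K → (x : V) ∈ Kᗮ → x = 0 := fun hx hx' =>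
    Subtype.ext (Submodule.disjoint_def.mp K.orthogonal_disjoint _ hx hx')
  refine ⟨fun u => ?_, fun u hu => ?_, fun u hu => ?_⟩
  · obtain ⟨v, hv, -, huv, -⟩ := hdec u
    exact ⟨v, hv, huv⟩
  · obtain ⟨v, hv, hAv, huv, -⟩ := hdec u
    rwa [sub_eq_zero.mp (hzero (K.sub_mem hu hv) huv)]
  · obtain ⟨v, hv, -, huv, hAuv⟩ := hdec u
    have hv0 : v = 0 := hzero hv (by simpa using Kᗮ.sub_mem hu huv)
    rwa [hv0, sub_zero] at hAuv

theorem orthogonal_subset_closure_domain_inter (hdense : Dense (A.domain : Set V))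
    [K.HasOrthogonalProjection]
    (hdec : ∀ u : A.domain, ∃ v : A.domain, (v : V) ∈ K ∧ (u : V) - (v : V) ∈ Kᗮ) :
    (Kᗮ : Set V) ⊆ closure (Subtype.val '' {u : A.domain | (u : V) ∈ Kᗮ}) := by
  intro w hw
  rw [← Kᗮ.starProjection_eq_self_iff.mpr hw]
  refine map_mem_closure Kᗮ.starProjection.continuous (hdense.closure_eq ▸ Set.mem_univ w) ?_
  intro u hu
  obtain ⟨v, hvK, huv⟩ := hdec ⟨u, hu⟩
  refine ⟨⟨u, hu⟩ - v, huv, ?_⟩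
  symm
  exact Kᗮ.eq_starProjection_of_mem_orthogonal huv (by simpa using K.le_orthogonal_orthogonal hvK)

end Reducing

section Adjoint

variable {E Es : Type*} [NormedAddCommGroup E] [InnerProductSpace ℂ E]
  [NormedAddCommGroup Es] [InnerProductSpace ℂ Es]
  {A : H →ₗ.[ℂ] H} {Γ : A.domain →ₗ[ℂ] E} {Γs : A.adjoint.domain →ₗ[ℂ] Es}
  {Gp : ℂ → H →L[ℂ] E} {Gs : ℂ → H →L[ℂ] Es}

theorem mem_of_add_smul_mem_of_adjoint (hdense : Dense (A.domain : Set H))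
    {K : Submodule ℂ H} [K.HasOrthogonalProjection] {c : ℂ}
    (hadj : ∀ w ∈ Kᗮ, ∃ y : A.adjoint.domain, (y : H) ∈ Kᗮ ∧ A.adjoint y + conj c • (y : H) = w)
    {x : A.domain} (hx : A x + c • (x : H) ∈ K) : (x : H) ∈ K := by
  rw [← K.orthogonal_orthogonal, Submodule.mem_orthogonal]
  intro w hw
  obtain ⟨y, hyK, rfl⟩ := hadj w hw
  rw [inner_add_left, inner_smul_left, conj_conj, LinearPMap.adjoint_isFormalAdjoint hdense y x,
    ← inner_smul_right, ← inner_add_right]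
  exact Submodule.inner_left_of_mem_orthogonal hx hyK

theorem IsDissipative.supSpanSingleton (hA : IsDissipative A)
    {y : A.adjoint.domain} (hy : (y : H) ∉ A.domain) (him : 0 ≤ (⟪(y : H), A.adjoint y⟫).im) :
    IsDissipative (A.supSpanSingleton y (A.adjoint y) hy) := by
  refine ⟨hA.1.mono fun _ => Submodule.mem_sup_left, fun ⟨w, hw⟩ => ?_⟩
  obtain ⟨a, ha, b, hb, rfl⟩ := Submodule.mem_sup.mp hw
  obtain ⟨c, rfl⟩ := Submodule.mem_span_singleton.mp hb
  rw [LinearPMap.supSpanSingleton_apply_mk _ _ _ _ _ ha, RingHom.id_apply,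
    im_inner_add_smul_add_smul c (LinearPMap.adjoint_isFormalAdjoint hA.1 y ⟨a, ha⟩).symm]
  exact add_nonneg (hA.2 _) (mul_nonneg (normSq_nonneg c) him)

theorem IsMaxDissipative.mem_domain_of_im_inner_adjoint_nonneg (hA : IsMaxDissipative A)
    (y : A.adjoint.domain) (him : 0 ≤ (⟪(y : H), A.adjoint y⟫).im) : (y : H) ∈ A.domain := by
  by_contra hy
  have hext := hA.2 _ (hA.1.supSpanSingleton hy him) (LinearPMap.left_le_sup _ _ _)
  have hmem : (y : H) ∈ (A.supSpanSingleton y (A.adjoint y) hy).domain :=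
    Submodule.mem_sup_right (Submodule.mem_span_singleton_self _)
  rw [hext] at hmem
  exact hy hmem

theorem exists_adjoint_apply_eq_of_boundary_eq_zero (hdense : Dense (A.domain : Set H))
    (hLag : ∀ u v : A.domain, ⟪(v : H), A u⟫ - ⟪A v, (u : H)⟫ = I * ⟪Γ v, Γ u⟫) {x : A.domain}
    (hx : Γ x = 0) : ∃ y : A.adjoint.domain, (y : H) = x ∧ A.adjoint y = A x := by
  have hsymm := inner_apply_eq_of_boundary_eq_zero hLag hx
  have hmem := LinearPMap.mem_adjoint_domain_of_exists _ ⟨A x, hsymm⟩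
  exact ⟨⟨x, hmem⟩, rfl, LinearPMap.adjoint_apply_eq hdense ⟨x, hmem⟩ hsymm⟩

theorem exists_adjoint_boundary_eq_zero_of_boundary_eq_zero (hdense : Dense (A.domain : Set H))
    (hLag : ∀ u v : A.domain, ⟪(v : H), A u⟫ - ⟪A v, (u : H)⟫ = I * ⟪Γ v, Γ u⟫)
    (hLagS : ∀ u v : A.adjoint.domain,
      ⟪(v : H), A.adjoint u⟫ - ⟪A.adjoint v, (u : H)⟫ = -(I * ⟪Γs v, Γs u⟫))
    {x : A.domain} (hx : Γ x = 0) :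
    ∃ y : A.adjoint.domain, (y : H) = x ∧ A.adjoint y = A x ∧ Γs y = 0 := by
  obtain ⟨y, hyx, hy⟩ := exists_adjoint_apply_eq_of_boundary_eq_zero hdense hLag hx
  refine ⟨y, hyx, hy, ?_⟩
  have hIm := two_mul_im_inner_eq_of_lagrange hLag x
  have hImS := two_mul_im_inner_eq_of_lagrange (lagrange_neg hLagS) y
  rw [LinearPMap.neg_apply, inner_neg_right, neg_im, hy, hyx] at hImS
  rw [hx, norm_zero] at hIm
  simpa using (show ‖Γs y‖ ^ 2 = 0 by linarith)

theorem exists_boundary_eq_zero_of_adjoint_boundary_eq_zero (hA : IsMaxDissipative A)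
    (hLag : ∀ u v : A.domain, ⟪(v : H), A u⟫ - ⟪A v, (u : H)⟫ = I * ⟪Γ v, Γ u⟫)
    (hLagS : ∀ u v : A.adjoint.domain,
      ⟪(v : H), A.adjoint u⟫ - ⟪A.adjoint v, (u : H)⟫ = -(I * ⟪Γs v, Γs u⟫))
    {y : A.adjoint.domain} (hy : Γs y = 0) :
    ∃ x : A.domain, (x : H) = y ∧ A x = A.adjoint y ∧ Γ x = 0 := by
  have him : (⟪(y : H), A.adjoint y⟫).im = 0 := by
    have hImS := two_mul_im_inner_eq_of_lagrange (lagrange_neg hLagS) y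
    rw [LinearPMap.neg_apply, inner_neg_right, neg_im, hy, norm_zero] at hImS
    linarith
  set x : A.domain := ⟨y, hA.mem_domain_of_im_inner_adjoint_nonneg y him.ge⟩
  have hx : Γ x = 0 := by
    have hIm := two_mul_im_inner_eq_of_lagrange hLag x
    have hxy : ⟪(x : H), A x⟫ = conj ⟪(y : H), A.adjoint y⟫ := by
      rw [inner_conj_symm, ← LinearPMap.adjoint_isFormalAdjoint hA.1.1 y x]
    rw [hxy, conj_im, him, neg_zero, mul_zero] at hIm
    simpa using hIm.symm
  obtain ⟨y', hy'x, hy'⟩ := exists_adjoint_apply_eq_of_boundary_eq_zero hA.1.1 hLag hx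
  obtain rfl : y' = y := Subtype.ext hy'x
  exact ⟨x, rfl, hy'.symm, hx⟩

theorem isBoundaryResolvent_neg_adjoint {Gm : ℂ → H →L[ℂ] Es}
    (hLagS : ∀ u v : A.adjoint.domain,
      ⟪(v : H), A.adjoint u⟫ - ⟪A.adjoint v, (u : H)⟫ = -(I * ⟪Γs v, Γs u⟫))
    (hGm : ∀ mu : ℂ, mu.im < 0 →
      ∀ u : A.adjoint.domain, Gm mu (A.adjoint u + mu • (u : H)) = Γs u)
    (hRm : ∀ mu : ℂ, mu.im < 0 → ∃ R : H →L[ℂ] H, IsResolventAt A.adjoint (-mu) R) :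
    IsBoundaryResolvent (-A.adjoint) Γs fun lam => -Gm (-lam) where
  im_inner_nonneg u := by
    have := two_mul_im_inner_eq_of_lagrange (lagrange_neg hLagS) u
    nlinarith [sq_nonneg ‖Γs u‖]
  exists_add_smul_eq lam hlam h := by
    obtain ⟨R, hR⟩ := hRm (-lam) (by simpa using hlam)
    obtain ⟨u, hu⟩ := hR.exists_add_smul_eq (-h)
    exact ⟨u, by rw [LinearPMap.neg_apply, ← neg_eq_iff_eq_neg.mpr hu]; module⟩
  apply_add_smul lam hlam u := by
    rw [← hGm (-lam) (by simpa using hlam) u, neg_apply, ← map_neg,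
      LinearPMap.neg_apply]
    congr 1
    module

theorem resolvent_mem_upperKer_inf (hdense : Dense (A.domain : Set H))
    (hLag : ∀ u v : A.domain, ⟪(v : H), A u⟫ - ⟪A v, (u : H)⟫ = I * ⟪Γ v, Γ u⟫)
    (hLagS : ∀ u v : A.adjoint.domain,
      ⟪(v : H), A.adjoint u⟫ - ⟪A.adjoint v, (u : H)⟫ = -(I * ⟪Γs v, Γs u⟫))
    (hP : IsBoundaryResolvent A Γ Gp) (hPs : IsBoundaryResolvent (-A.adjoint) Γs Gs) {w : H}
    (hw : w ∈ upperKer Gp ⊓ upperKer Gs) {lam : ℂ} (hlam : 0 < lam.im) {x : A.domain}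
    (hx : A x + lam • (x : H) = w) : Γ x = 0 ∧ (x : H) ∈ upperKer Gp ⊓ upperKer Gs := by
  refine hP.mem_upperKer_inf_of_add_smul_eq hPs (fun x hx => ?_) hw hlam hx
  obtain ⟨y, hyx, hy, hΓs⟩ :=
    exists_adjoint_boundary_eq_zero_of_boundary_eq_zero hdense hLag hLagS hx
  exact ⟨y, hyx, by rw [LinearPMap.neg_apply, hy], hΓs⟩

theorem adjoint_resolvent_mem_upperKer_inf (hA : IsMaxDissipative A)
    (hLag : ∀ u v : A.domain, ⟪(v : H), A u⟫ - ⟪A v, (u : H)⟫ = I * ⟪Γ v, Γ u⟫)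
    (hLagS : ∀ u v : A.adjoint.domain,
      ⟪(v : H), A.adjoint u⟫ - ⟪A.adjoint v, (u : H)⟫ = -(I * ⟪Γs v, Γs u⟫))
    (hP : IsBoundaryResolvent A Γ Gp) (hPs : IsBoundaryResolvent (-A.adjoint) Γs Gs) {w : H}
    (hw : w ∈ upperKer Gp ⊓ upperKer Gs) {mu : ℂ} (hmu : mu.im < 0) {y : A.adjoint.domain}
    (hy : A.adjoint y + mu • (y : H) = w) : Γs y = 0 ∧ (y : H) ∈ upperKer Gp ⊓ upperKer Gs := by
  rw [inf_comm] at hw ⊢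
  refine hPs.mem_upperKer_inf_of_add_smul_eq hP (fun y hy => ?_) (neg_mem hw) (lam := -mu)
    (by simpa using hmu) (by rw [LinearPMap.neg_apply, ← hy]; module)
  obtain ⟨x, hxy, hx, hΓ⟩ := exists_boundary_eq_zero_of_adjoint_boundary_eq_zero hA hLag hLagS hy
  exact ⟨x, hxy, by rw [LinearPMap.neg_apply, neg_neg, hx], hΓ⟩

end Adjoint

theorem orthogonal_span_iUnion_range_adjoint {ι E : Type*} [NormedAddCommGroup E]
    [InnerProductSpace ℂ E] [CompleteSpace E] (T : ι → H →L[ℂ] E) (s : Set ι) :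
    (Submodule.span ℂ (⋃ i ∈ s, Set.range (ContinuousLinearMap.adjoint (T i))))ᗮ =
      ⨅ i ∈ s, (T i).ker := by
  rw [Submodule.span_iUnion₂, ← Submodule.iInf_orthogonal]
  refine iInf_congr fun i => ?_
  by_cases hi : i ∈ s
  · simp only [hi, iSup_pos, iInf_pos]
    change (Submodule.span ℂ ((ContinuousLinearMap.adjoint (T i)).range : Set H))ᗮ = _
    rw [Submodule.span_eq, ContinuousLinearMap.orthogonal_range,
      ContinuousLinearMap.adjoint_adjoint]
  · simp [hi]

theorem orthogonal_closure_span_range_adjoint_eq {E Es : Type*} [NormedAddCommGroup E]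
    [InnerProductSpace ℂ E] [CompleteSpace E] [NormedAddCommGroup Es] [InnerProductSpace ℂ Es]
    [CompleteSpace Es] (Gp : ℂ → H →L[ℂ] E) (Gm : ℂ → H →L[ℂ] Es) :
    ((Submodule.span ℂ
      ((⋃ lam ∈ {z : ℂ | 0 < z.im}, Set.range (ContinuousLinearMap.adjoint (Gp lam))) ∪
       (⋃ mu ∈ {z : ℂ | z.im < 0}, Set.range (ContinuousLinearMap.adjoint (Gm mu)))))
        |>.topologicalClosure)ᗮ = upperKer Gp ⊓ upperKer fun lam => -Gm (-lam) := by
  rw [Submodule.orthogonal_closure, Submodule.span_union, ← Submodule.inf_orthogonal,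
    orthogonal_span_iUnion_range_adjoint, orthogonal_span_iUnion_range_adjoint]
  congr 1
  ext w
  simp only [upperKer, Submodule.mem_iInf, Set.mem_ofPred_eq, LinearMap.mem_ker]
  exact ⟨fun h lam hlam => by simpa using h (-lam) (by simpa using hlam),
    fun h mu hmu => by simpa using h (-mu) (by simpa using hmu)⟩

theorem langer_decomposition_general
    {E Es : Type*} [NormedAddCommGroup E] [InnerProductSpace ℂ E] [CompleteSpace E]
    [NormedAddCommGroup Es] [InnerProductSpace ℂ Es] [CompleteSpace Es]
    (A : H →ₗ.[ℂ] H) (hA : IsMaxDissipative A)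
    (Γ : A.domain →ₗ[ℂ] E) (Γs : A.adjoint.domain →ₗ[ℂ] Es)
    (hLag : ∀ u v : A.domain, ⟪(v : H), A u⟫ - ⟪A v, (u : H)⟫ = Complex.I * ⟪Γ v, Γ u⟫)
    (hLagS : ∀ u v : A.adjoint.domain,
      ⟪(v : H), A.adjoint u⟫ - ⟪A.adjoint v, (u : H)⟫ = -(Complex.I * ⟪Γs v, Γs u⟫))
    -- `Gp λ = Γ(A+λ)⁻¹` for `Im λ > 0`, `Gm μ = Γ_*(A*+μ)⁻¹` for `Im μ < 0`
    (Gp : ℂ → H →L[ℂ] E) (Gm : ℂ → H →L[ℂ] Es)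
    (hGp : ∀ lam : ℂ, 0 < lam.im → ∀ u : A.domain, Gp lam (A u + lam • (u : H)) = Γ u)
    (hGm : ∀ mu : ℂ, mu.im < 0 →
      ∀ u : A.adjoint.domain, Gm mu (A.adjoint u + mu • (u : H)) = Γs u)
    (hRp : ∀ lam : ℂ, 0 < lam.im → ∃ R : H →L[ℂ] H, IsResolventAt A (-lam) R)
    (hRm : ∀ mu : ℂ, mu.im < 0 → ∃ R : H →L[ℂ] H, IsResolventAt A.adjoint (-mu) R)
    (K : Submodule ℂ H)
    (hK : K = (Submodule.span ℂ
      ((⋃ lam ∈ {z : ℂ | 0 < z.im}, Set.range (ContinuousLinearMap.adjoint (Gp lam))) ∪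
       (⋃ mu ∈ {z : ℂ | z.im < 0},
          Set.range (ContinuousLinearMap.adjoint (Gm mu))))).topologicalClosure) :
    -- `K = H_cns` reduces `A` :
    (∀ u : A.domain, ∃ v : A.domain, (v : H) ∈ K ∧ (u : H) - (v : H) ∈ Kᗮ) ∧
    (∀ u : A.domain, (u : H) ∈ K → A u ∈ K) ∧
    (∀ u : A.domain, (u : H) ∈ Kᗮ → A u ∈ Kᗮ) ∧
    -- the restriction of `A` to `H_sa = Kᗮ` is selfadjoint :
    ((Kᗮ : Set H) ⊆ closure (Subtype.val '' {u : A.domain | (u : H) ∈ Kᗮ}) ∧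
     (∀ u v : A.domain, (u : H) ∈ Kᗮ → (v : H) ∈ Kᗮ → ⟪A u, (v : H)⟫ = ⟪(u : H), A v⟫) ∧
     (∀ w ∈ Kᗮ, ∃ u : A.domain, (u : H) ∈ Kᗮ ∧ A u + Complex.I • (u : H) = w) ∧
     (∀ w ∈ Kᗮ, ∃ u : A.domain, (u : H) ∈ Kᗮ ∧ A u - Complex.I • (u : H) = w)) := by
  have hdense := hA.1.1
  have hP : IsBoundaryResolvent A Γ Gp :=
    ⟨hA.1.2, fun lam hlam => (hRp lam hlam).choose_spec.exists_add_smul_eq, hGp⟩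
  have hPs := isBoundaryResolvent_neg_adjoint hLagS hGm hRm
  have hKperp : Kᗮ = upperKer Gp ⊓ upperKer fun lam => -Gm (-lam) := by
    rw [hK, orthogonal_closure_span_range_adjoint_eq]
  have : K.HasOrthogonalProjection := by rw [hK]; infer_instance
  have hIim : 0 < I.im := by simp
  have hres : ∀ x : A.domain, A x + I • (x : H) ∈ Kᗮ → Γ x = 0 ∧ (x : H) ∈ Kᗮ := fun x hx => by
    rw [hKperp] at hx ⊢
    exact resolvent_mem_upperKer_inf hdense hLag hLagS hP hPs hx hIim rfl
  have hres_adj : ∀ w ∈ Kᗮ, ∃ y : A.adjoint.domain,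
      ((y : H) ∈ Kᗮ ∧ A.adjoint y + conj I • (y : H) = w) ∧ Γs y = 0 := fun w hw => by
    obtain ⟨y, hy⟩ := (hRm (-I) (by simp)).choose_spec.exists_add_smul_eq w
    rw [hKperp] at hw ⊢
    obtain ⟨hΓs, hyK⟩ := adjoint_resolvent_mem_upperKer_inf hA hLag hLagS hP hPs hw (by simp) hy
    exact ⟨y, ⟨hyK, by rwa [conj_I]⟩, hΓs⟩
  have hadj w (hw : w ∈ Kᗮ) := (hres_adj w hw).imp fun _ => And.left
  obtain ⟨hdec, hKinv, hKperpinv⟩ := reduces_of_resolvent_invariant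
    (hP.exists_add_smul_eq I hIim) (fun x => mem_of_add_smul_mem_of_adjoint hdense hadj)
    fun x hx => (hres x hx).2
  refine ⟨hdec, hKinv, hKperpinv, orthogonal_subset_closure_domain_inter hdense hdec,
    fun u v hu _ => ?_, fun w hw => ?_, fun w hw => ?_⟩
  · have hΓu := (hres u (Kᗮ.add_mem (hKperpinv u hu) (Kᗮ.smul_mem I hu))).1
    exact inner_apply_eq_of_boundary_eq_zero hLag hΓu v
  · obtain ⟨x, rfl⟩ := hP.exists_add_smul_eq I hIim w
    exact ⟨x, (hres x hw).2, rfl⟩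
  · obtain ⟨y, ⟨hyK, rfl⟩, hΓy⟩ := hres_adj w hw
    obtain ⟨x, hxy, hAx, -⟩ := exists_boundary_eq_zero_of_adjoint_boundary_eq_zero hA hLag hLagS hΓy
    exact ⟨x, hxy ▸ hyK, by rw [hAx, hxy, conj_I, neg_smul, sub_eq_add_neg]⟩

/-- Langer decomposition: the closed span `H_cns` of the ranges of `(Γ(A+λ)⁻¹)*`
(`Im λ > 0`) and `(Γ_*(A*+μ)⁻¹)*` (`Im μ < 0`) is a reducing subspace for `A`, and the
restriction of `A` to its orthogonal complement `H_sa = H ⊖ H_cns` is selfadjoint. -/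
theorem langer_decomposition
    {E Es : Type*} [NormedAddCommGroup E] [InnerProductSpace ℂ E] [CompleteSpace E]
    [NormedAddCommGroup Es] [InnerProductSpace ℂ Es] [CompleteSpace Es]
    (A : H →ₗ.[ℂ] H) (hA : IsMaxDissipative A)
    (Γ : A.domain →ₗ[ℂ] E) (Γs : A.adjoint.domain →ₗ[ℂ] Es)
    (hΓd : DenseRange Γ) (hΓsd : DenseRange Γs)
    (hLag : ∀ u v : A.domain, ⟪(v : H), A u⟫ - ⟪A v, (u : H)⟫ = Complex.I * ⟪Γ v, Γ u⟫)
    (hLagS : ∀ u v : A.adjoint.domain,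
      ⟪(v : H), A.adjoint u⟫ - ⟪A.adjoint v, (u : H)⟫ = -(Complex.I * ⟪Γs v, Γs u⟫))
    -- `Gp λ = Γ(A+λ)⁻¹` for `Im λ > 0`, `Gm μ = Γ_*(A*+μ)⁻¹` for `Im μ < 0`
    (Gp : ℂ → H →L[ℂ] E) (Gm : ℂ → H →L[ℂ] Es)
    (hGp : ∀ lam : ℂ, 0 < lam.im → ∀ u : A.domain, Gp lam (A u + lam • (u : H)) = Γ u)
    (hGm : ∀ mu : ℂ, mu.im < 0 →
      ∀ u : A.adjoint.domain, Gm mu (A.adjoint u + mu • (u : H)) = Γs u)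
    (hRp : ∀ lam : ℂ, 0 < lam.im → ∃ R : H →L[ℂ] H, IsResolventAt A (-lam) R)
    (hRm : ∀ mu : ℂ, mu.im < 0 → ∃ R : H →L[ℂ] H, IsResolventAt A.adjoint (-mu) R)
    (K : Submodule ℂ H)
    (hK : K = (Submodule.span ℂ
      ((⋃ lam ∈ {z : ℂ | 0 < z.im}, Set.range (ContinuousLinearMap.adjoint (Gp lam))) ∪
       (⋃ mu ∈ {z : ℂ | z.im < 0},
          Set.range (ContinuousLinearMap.adjoint (Gm mu))))).topologicalClosure) :
    -- `K = H_cns` reduces `A` :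
    (∀ u : A.domain, ∃ v : A.domain, (v : H) ∈ K ∧ (u : H) - (v : H) ∈ Kᗮ) ∧
    (∀ u : A.domain, (u : H) ∈ K → A u ∈ K) ∧
    (∀ u : A.domain, (u : H) ∈ Kᗮ → A u ∈ Kᗮ) ∧
    -- the restriction of `A` to `H_sa = Kᗮ` is selfadjoint :
    ((Kᗮ : Set H) ⊆ closure (Subtype.val '' {u : A.domain | (u : H) ∈ Kᗮ}) ∧
     (∀ u v : A.domain, (u : H) ∈ Kᗮ → (v : H) ∈ Kᗮ → ⟪A u, (v : H)⟫ = ⟪(u : H), A v⟫) ∧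
     (∀ w ∈ Kᗮ, ∃ u : A.domain, (u : H) ∈ Kᗮ ∧ A u + Complex.I • (u : H) = w) ∧
     (∀ w ∈ Kᗮ, ∃ u : A.domain, (u : H) ∈ Kᗮ ∧ A u - Complex.I • (u : H) = w)) :=
  langer_decomposition_general A hA Γ Γs hLag hLagS Gp Gm hGp hGm hRp hRm K hK
end
end

section
/- Let h ∈ H satisfy Γ(A+λ)^{-1}h = 0 for all λ ∈ ℂ₊ and Γ_*(A*+μ)^{-1}h = 0 for all μ ∈ ℂ₋. Then the resolvents of A and A* commute on h: (A+λ)^{-1}(A*+μ)^{-1}h = (A*+μ)^{-1}(A+λ)^{-1}h for all λ ∈ ℂ₊, μ ∈ ℂ₋. -/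
open Complex MeasureTheory

noncomputable section

variable {H : Type*} [NormedAddCommGroup H] [InnerProductSpace ℂ H] [CompleteSpace H]

local notation "⟪" x ", " y "⟫" => @inner ℂ _ _ x y

/-- If `Γ(A+λ)⁻¹ h = 0` for all `λ ∈ ℂ₊` and `Γ_*(A*+μ)⁻¹ h = 0` for all `μ ∈ ℂ₋`, then
the resolvents of `A` and `A*` commute on `h`. -/
theorem resolvents_commute_on_h
    {E Es : Type*} [NormedAddCommGroup E] [InnerProductSpace ℂ E] [CompleteSpace E]
    [NormedAddCommGroup Es] [InnerProductSpace ℂ Es] [CompleteSpace Es]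
    (A : H →ₗ.[ℂ] H) (hA : IsMaxDissipative A)
    (Γ : A.domain →ₗ[ℂ] E) (Γs : A.adjoint.domain →ₗ[ℂ] Es)
    (hLag : ∀ u v : A.domain, ⟪(v : H), A u⟫ - ⟪A v, (u : H)⟫ = Complex.I * ⟪Γ v, Γ u⟫)
    (hLagS : ∀ u v : A.adjoint.domain,
      ⟪(v : H), A.adjoint u⟫ - ⟪A.adjoint v, (u : H)⟫ = -(Complex.I * ⟪Γs v, Γs u⟫))
    -- resolvent families `R λ = (A+λ)⁻¹`, `RS μ = (A*+μ)⁻¹`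
    (R : ℂ → H →L[ℂ] H) (RS : ℂ → H →L[ℂ] H)
    (hR : ∀ lam : ℂ, 0 < lam.im → IsResolventAt A (-lam) (R lam))
    (hRS : ∀ mu : ℂ, mu.im < 0 → IsResolventAt A.adjoint (-mu) (RS mu))
    -- `Gp λ = Γ(A+λ)⁻¹`, `Gm μ = Γ_*(A*+μ)⁻¹`
    (Gp : ℂ → H →L[ℂ] E) (Gm : ℂ → H →L[ℂ] Es)
    (hGp : ∀ lam : ℂ, 0 < lam.im → ∀ u : A.domain, Gp lam (A u + lam • (u : H)) = Γ u)
    (hGm : ∀ mu : ℂ, mu.im < 0 →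
      ∀ u : A.adjoint.domain, Gm mu (A.adjoint u + mu • (u : H)) = Γs u)
    (h : H)
    (hvp : ∀ lam : ℂ, 0 < lam.im → Gp lam h = 0)
    (hvm : ∀ mu : ℂ, mu.im < 0 → Gm mu h = 0) :
    ∀ lam mu : ℂ, 0 < lam.im → mu.im < 0 →
      R lam (RS mu h) = RS mu (R lam h) := by
  intro lam mu hl hm
  have hdense : Dense (A.domain : Set H) := hA.1.1
  have hfa : A.adjoint.IsFormalAdjoint A := LinearPMap.adjoint_isFormalAdjoint hdense
  -- u = R lam h
  obtain ⟨u, hu1, hu2⟩ := (hR lam hl).2 h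
  have hu2' : A u + lam • (u : H) = h := by rw [← hu2, neg_smul]; abel
  -- v = RS mu h
  obtain ⟨v, hv1, hv2⟩ := (hRS mu hm).2 h
  have hv2' : A.adjoint v + mu • (v : H) = h := by rw [← hv2]; rw [neg_smul]; abel
  -- boundary values vanish
  have hGu : Γ u = 0 := by rw [← hGp lam hl u, hu2', hvp lam hl]
  have hGv : Γs v = 0 := by rw [← hGm mu hm v, hv2', hvm mu hm]
  rw [← hu1, ← hv1]
  -- x = R lam v, y = RS mu u
  obtain ⟨x, hx1, hx2⟩ := (hR lam hl).2 (v : H)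
  obtain ⟨y, hy1, hy2⟩ := (hRS mu hm).2 (u : H)
  have hx2' : A x + lam • (x : H) = (v : H) := by rw [← hx2, neg_smul]; abel
  have hy2' : A.adjoint y + mu • (y : H) = (u : H) := by rw [← hy2, neg_smul]; abel
  rw [← hx1, ← hy1]
  apply ext_inner_left ℂ
  intro f
  -- test decompositions
  have hlc : 0 > ((starRingEnd ℂ) lam).im := by simpa using hl
  have hmc : 0 < ((starRingEnd ℂ) mu).im := by simpa using hm
  obtain ⟨g, hg1, hg2⟩ := (hRS ((starRingEnd ℂ) lam) hlc).2 f
  obtain ⟨p, hp1, hp2⟩ := (hR ((starRingEnd ℂ) mu) hmc).2 f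
  have hg2' : A.adjoint g + (starRingEnd ℂ) lam • (g : H) = f := by rw [← hg2, neg_smul]; abel
  have hp2' : A p + (starRingEnd ℂ) mu • (p : H) = f := by rw [← hp2, neg_smul]; abel
  -- left side: ⟪f, x⟫ = ⟪g, v⟫
  have hLx : ⟪f, (x : H)⟫ = ⟪(g : H), (v : H)⟫ := by
    rw [← hg2', ← hx2']
    rw [inner_add_left, inner_smul_left, inner_add_right, inner_smul_right,
      hfa g x, starRingEnd_self_apply]
  -- right side: ⟪f, y⟫ = ⟪p, u⟫
  have hRy : ⟪f, (y : H)⟫ = ⟪(p : H), (u : H)⟫ := by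
    have hadj : ⟪A p, (y : H)⟫ = ⟪(p : H), A.adjoint y⟫ := by
      rw [← inner_conj_symm, ← hfa y p, inner_conj_symm]
    rw [← hp2', ← hy2']
    rw [inner_add_left, inner_smul_left, inner_add_right, inner_smul_right,
      hadj, starRingEnd_self_apply]
  rw [hLx, hRy]
  -- now show ⟪g, v⟫ = ⟪p, u⟫
  have E1 : ⟪(g : H), h⟫ = ⟪f, (v : H)⟫ + (mu - lam) * ⟪(g : H), (v : H)⟫ := by
    have hlag := hLagS v g
    rw [hGv, inner_zero_right, mul_zero, neg_zero, sub_eq_zero] at hlag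
    rw [← hv2', inner_add_right, inner_smul_right, hlag, ← hg2']
    rw [inner_add_left, inner_smul_left, starRingEnd_self_apply]
    ring
  have E2 : ⟪(p : H), h⟫ = ⟪f, (u : H)⟫ + (lam - mu) * ⟪(p : H), (u : H)⟫ := by
    have hlag := hLag u p
    rw [hGu, inner_zero_right, mul_zero, sub_eq_zero] at hlag
    rw [← hu2', inner_add_right, inner_smul_right, hlag, ← hp2']
    rw [inner_add_left, inner_smul_left, starRingEnd_self_apply]
    ring
  have E3 : ⟪f, (v : H)⟫ = ⟪(p : H), h⟫ := by
    have hadj : ⟪A p, (v : H)⟫ = ⟪(p : H), A.adjoint v⟫ := by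
      rw [← inner_conj_symm, ← hfa v p, inner_conj_symm]
    rw [← hp2', ← hv2']
    rw [inner_add_left, inner_smul_left, inner_add_right, inner_smul_right,
      hadj, starRingEnd_self_apply]
  have E4 : ⟪f, (u : H)⟫ = ⟪(g : H), h⟫ := by
    rw [← hg2', ← hu2']
    rw [inner_add_left, inner_smul_left, inner_add_right, inner_smul_right,
      hfa g u, starRingEnd_self_apply]
  have hne : mu - lam ≠ 0 := by
    intro hc
    rw [sub_eq_zero.mp hc] at hm
    linarith
  have key : (mu - lam) * (⟪(g : H), (v : H)⟫ - ⟪(p : H), (u : H)⟫) = 0 := by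
    linear_combination -E1 - E2 - E3 - E4
  rcases mul_eq_zero.mp key with hc | hc
  · exact absurd hc hne
  · exact sub_eq_zero.mp hc
end
end

section
/- Let S(z) be the characteristic function of a maximally dissipative operator A. Then for any μ, z ∈ ℂ₋, (Γ_*(A*−μ̄)^{-1})* S(z̄) = [I − (z̄ − μ)(A − μ)^{-1}](Γ(A − z)^{-1})* as operators from E to H. -/
open Complex MeasureTheory

noncomputable section

variable {H : Type*} [NormedAddCommGroup H] [InnerProductSpace ℂ H] [CompleteSpace H]

local notation "⟪" x ", " y "⟫" => @inner ℂ _ _ x y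

/-- For `μ, z ∈ ℂ₋`:
`(Γ_*(A*-μ̄)⁻¹)* S(z̄) = [I - (z̄-μ)(A-μ)⁻¹] (Γ(A-z)⁻¹)*` as operators from `E` to `H`. -/
theorem adjoint_gamma_star_S
    {E Es : Type*} [NormedAddCommGroup E] [InnerProductSpace ℂ E] [CompleteSpace E]
    [NormedAddCommGroup Es] [InnerProductSpace ℂ Es] [CompleteSpace Es]
    (A : H →ₗ.[ℂ] H) (hA : IsMaxDissipative A)
    (Γ : A.domain →ₗ[ℂ] E) (Γs : A.adjoint.domain →ₗ[ℂ] Es)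
    (hΓd : DenseRange Γ) (hΓsd : DenseRange Γs)
    (hLag : ∀ u v : A.domain, ⟪(v : H), A u⟫ - ⟪A v, (u : H)⟫ = Complex.I * ⟪Γ v, Γ u⟫)
    (hLagS : ∀ u v : A.adjoint.domain,
      ⟪(v : H), A.adjoint u⟫ - ⟪A.adjoint v, (u : H)⟫ = -(Complex.I * ⟪Γs v, Γs u⟫))
    (mu z : ℂ) (hmu : mu.im < 0) (hz : z.im < 0)
    -- resolvents: `μ, z ∈ ℂ₋ ⊆ ρ(A)`, `μ̄, z̄ ∈ ℂ₊ ⊆ ρ(A*)`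
    (Rmu Rz RSmuc RSzc : H →L[ℂ] H)
    (hRmu : IsResolventAt A mu Rmu) (hRz : IsResolventAt A z Rz)
    (hRSmuc : IsResolventAt A.adjoint (starRingEnd ℂ mu) RSmuc)
    (hRSzc : IsResolventAt A.adjoint (starRingEnd ℂ z) RSzc)
    -- `Gs = Γ_*(A*-μ̄)⁻¹`, `Gzc = Γ_*(A*-z̄)⁻¹`, `Gz = Γ(A-z)⁻¹`
    (Gs Gzc : H →L[ℂ] Es) (Gz : H →L[ℂ] E)
    (hGs : ∀ u : A.adjoint.domain, Gs (A.adjoint u - (starRingEnd ℂ mu) • (u : H)) = Γs u)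
    (hGzc : ∀ u : A.adjoint.domain, Gzc (A.adjoint u - (starRingEnd ℂ z) • (u : H)) = Γs u)
    (hGz : ∀ u : A.domain, Gz (A u - z • (u : H)) = Γ u)
    -- `Szc = S(z̄)`
    (Szc : E →L[ℂ] Es) (hSzcc : ‖Szc‖ ≤ 1)
    (hSzc : ∀ u : A.domain, Szc (Γ u) = Gzc (A u - (starRingEnd ℂ z) • (u : H))) :
    (ContinuousLinearMap.adjoint Gs).comp Szc
      = ((1 : H →L[ℂ] H) - ((starRingEnd ℂ z) - mu) • Rmu).comp
          (ContinuousLinearMap.adjoint Gz) := by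
  have hdense : Dense (A.domain : Set H) := hA.1.1
  -- the fundamental adjoint pairing
  have hadj : ∀ (v : A.adjoint.domain) (x : A.domain),
      ⟪(A.adjoint v : H), (x : H)⟫ = ⟪(v : H), A x⟫ :=
    LinearPMap.adjoint_isFormalAdjoint hdense
  have hadj' : ∀ (v : A.adjoint.domain) (x : A.domain),
      ⟪(x : H), (A.adjoint v : H)⟫ = ⟪A x, (v : H)⟫ := by
    intro v x
    rw [← inner_conj_symm, hadj v x, inner_conj_symm]
  have key : ∀ u : A.domain,
      (ContinuousLinearMap.adjoint Gs) (Szc (Γ u))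
        = ((1 : H →L[ℂ] H) - ((starRingEnd ℂ z) - mu) • Rmu)
            ((ContinuousLinearMap.adjoint Gz) (Γ u)) := by
    intro u
    apply ext_inner_left ℂ
    intro h
    obtain ⟨v, hv, hveq⟩ := hRSmuc.2 h
    obtain ⟨p, hp, hpeq⟩ := hRz.2 h
    obtain ⟨w, hw, hweq⟩ := hRSzc.2 (A u - (starRingEnd ℂ z) • (u : H))
    obtain ⟨r, hr, hreq⟩ := hRmu.2 ((ContinuousLinearMap.adjoint Gz) (Γ u))
    obtain ⟨s₀, hs₀, hs₀eq⟩ := hRz.2 (v : H)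
    -- identifications of the boundary maps
    have hGsh : Gs h = Γs v := by rw [← hveq]; exact hGs v
    have hSzcu : Szc (Γ u) = Γs w := by rw [hSzc u, ← hweq]; exact hGzc w
    have hGzh : Gz h = Γ p := by rw [← hpeq]; exact hGz p
    have hGzv : Gz (v : H) = Γ s₀ := by rw [← hs₀eq]; exact hGz s₀
    -- left-hand side
    have hL : ⟪h, (ContinuousLinearMap.adjoint Gs) (Szc (Γ u))⟫ = ⟪Γs v, Γs w⟫ := by
      rw [ContinuousLinearMap.adjoint_inner_right, hGsh, hSzcu]
    -- right-hand side
    have hRmur : Rmu ((ContinuousLinearMap.adjoint Gz) (Γ u)) = (r : H) := hr.symm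
    have hhr : ⟪h, (r : H)⟫ = ⟪Γ s₀, Γ u⟫ := by
      have h1 : ⟪h, (r : H)⟫ = ⟪(v : H), A r - mu • (r : H)⟫ := by
        rw [← hveq, inner_sub_left, inner_smul_left, inner_sub_right, inner_smul_right,
          hadj v r]
        simp
      rw [h1, hreq, ContinuousLinearMap.adjoint_inner_right, hGzv]
    have hR : ⟪h, ((1 : H →L[ℂ] H) - ((starRingEnd ℂ z) - mu) • Rmu)
          ((ContinuousLinearMap.adjoint Gz) (Γ u))⟫
        = ⟪Γ p, Γ u⟫ - ((starRingEnd ℂ z) - mu) * ⟪Γ s₀, Γ u⟫ := by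
      simp only [ContinuousLinearMap.sub_apply, ContinuousLinearMap.one_apply,
        ContinuousLinearMap.smul_apply, inner_sub_right, inner_smul_right, hRmur, hhr,
        ContinuousLinearMap.adjoint_inner_right, hGzh]
    rw [hL, hR]
    -- now a scalar computation
    have E1 := hLagS w v
    have E2 := hLag u p
    have E3 := hLag u s₀
    -- ⟪h, w⟫ = ⟪p, Au - z̄ u⟫
    have F1 : ⟪h, (w : H)⟫ = ⟪(p : H), A u⟫ - (starRingEnd ℂ z) * ⟪(p : H), (u : H)⟫ := by
      have h2 := congrArg (fun x => ⟪(p : H), x⟫) hweq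
      simp only [inner_sub_right, inner_smul_right] at h2
      rw [← hpeq, inner_sub_left, inner_smul_left, ← hadj' w p]
      linear_combination h2
    -- ⟪v, A* w⟫ - z̄⟪v,w⟫ = ⟪v, Au⟫ - z̄⟪v,u⟫
    have F2 : ⟪(v : H), A.adjoint w⟫ - (starRingEnd ℂ z) * ⟪(v : H), (w : H)⟫
        = ⟪(v : H), A u⟫ - (starRingEnd ℂ z) * ⟪(v : H), (u : H)⟫ := by
      have := congrArg (fun x => ⟪(v : H), x⟫) hweq
      simpa only [inner_sub_right, inner_smul_right] using this
    -- ⟪A* v, w⟫ = ⟪h, w⟫ + μ⟪v, w⟫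
    have F3 : ⟪(A.adjoint v : H), (w : H)⟫ = ⟪h, (w : H)⟫ + mu * ⟪(v : H), (w : H)⟫ := by
      have := congrArg (fun x => ⟪x, (w : H)⟫) hveq
      simp only [inner_sub_left, inner_smul_left, RingHom.id_apply,
        Complex.conj_conj, starRingEnd_self_apply] at this ⊢
      linear_combination this
    -- ⟪A p, u⟫ = ⟪h, u⟫ + z̄⟪p, u⟫
    have F4 : ⟪A p, (u : H)⟫ = ⟪h, (u : H)⟫ + (starRingEnd ℂ z) * ⟪(p : H), (u : H)⟫ := by
      have := congrArg (fun x => ⟪x, (u : H)⟫) hpeq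
      simp only [inner_sub_left, inner_smul_left] at this
      linear_combination this
    -- ⟪h, u⟫ = ⟪v, Au⟫ - μ⟪v, u⟫
    have F5 : ⟪h, (u : H)⟫ = ⟪(v : H), A u⟫ - mu * ⟪(v : H), (u : H)⟫ := by
      have := congrArg (fun x => ⟪x, (u : H)⟫) hveq
      simp only [inner_sub_left, inner_smul_left, Complex.conj_conj,
        starRingEnd_self_apply] at this
      rw [hadj v u] at this
      linear_combination -this
    -- ⟪v, w⟫ = ⟪s₀, Au⟫ - ⟪A s₀, u⟫ + ⟪v, u⟫ - z̄⟪s₀,u⟫ + z⟪s₀,u⟫ ... via ⟪v,w⟫ = ⟪s₀, Au - z̄ u⟫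
    have F6 : ⟪(v : H), (w : H)⟫
        = ⟪(s₀ : H), A u⟫ - (starRingEnd ℂ z) * ⟪(s₀ : H), (u : H)⟫ := by
      have h1 : ⟪(v : H), (w : H)⟫ = ⟪(s₀ : H), A.adjoint w⟫
          - (starRingEnd ℂ z) * ⟪(s₀ : H), (w : H)⟫ := by
        have := congrArg (fun x => ⟪x, (w : H)⟫) hs₀eq
        simp only [inner_sub_left, inner_smul_left] at this
        rw [hadj' w s₀]
        linear_combination -this
      have h2 := congrArg (fun x => ⟪(s₀ : H), x⟫) hweq
      simp only [inner_sub_right, inner_smul_right] at h2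
      rw [h1]
      linear_combination h2
    -- ⟪A s₀, u⟫ = ⟪v, u⟫ + z⟪s₀, u⟫
    have F7 : ⟪A s₀, (u : H)⟫ = ⟪(v : H), (u : H)⟫
        + (starRingEnd ℂ z) * ⟪(s₀ : H), (u : H)⟫ := by
      have := congrArg (fun x => ⟪x, (u : H)⟫) hs₀eq
      simp only [inner_sub_left, inner_smul_left] at this
      linear_combination this
    apply mul_left_cancel₀ Complex.I_ne_zero
    linear_combination E1 + E2 - ((starRingEnd ℂ z) - mu) * E3
      - F2 + F3 + F1 + F4 + F5
      - ((starRingEnd ℂ z) - mu) * F6 - ((starRingEnd ℂ z) - mu) * F7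
  -- extend from the dense range of Γ to all of E
  have hd : Dense ((Submodule.span ℂ (Set.range Γ) : Submodule ℂ E) : Set E) :=
    hΓd.mono Submodule.subset_span
  refine ContinuousLinearMap.ext_on hd ?_
  rintro _ ⟨u, rfl⟩
  simpa using key u
end
end
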